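/- arXiv:1612.05381 — 7 statements merged into one kernel-verified Lean document; each statement's English description precedes it below -/
import Mathlib

section
/- If G is a connected graph and H is a connected spanning subgraph of G, then tmc(G) ≥ m(G) − m(H) + tmc(H), where m(·) denotes the number of edges. -/
open SimpleGraph

/-- A walk in a total-colored graph is *total monochromatic* if all of its edges and
internal vertices have the same color. -/
def IsTotalMonoWalk {V : Type*} {G : SimpleGraph V} (ce : Sym2 V → ℕ) (cv : V → ℕ)
    {u v : V} (w : G.Walk u v) : Prop :=
  ∃ c, (∀ e ∈ w.edges, ce e = c) ∧ ∀ x ∈ w.support.tail.dropLast, cv x = c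

/-- A total coloring (edge coloring `ce`, vertex coloring `cv`) of `G` is a
*TMC-coloring* if any two vertices are connected by a total monochromatic path. -/
def IsTMCColoring {V : Type*} (G : SimpleGraph V) (ce : Sym2 V → ℕ) (cv : V → ℕ) : Prop :=
  ∀ u v : V, u ≠ v → ∃ w : G.Walk u v, w.IsPath ∧ IsTotalMonoWalk ce cv w

/-- The number of colors used by a total coloring of `G`:
colors appearing on edges of `G` together with colors appearing on vertices. -/
noncomputable def colorsUsed {V : Type*} (G : SimpleGraph V) (ce : Sym2 V → ℕ) (cv : V → ℕ) : ℕ :=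
  (ce '' G.edgeSet ∪ Set.range cv).ncard

/-- The total monochromatic connection number `tmc G`: the maximum number of colors
used in a TMC-coloring of `G`. -/
noncomputable def tmc {V : Type*} [Fintype V] (G : SimpleGraph V) : ℕ :=
  sSup {k | ∃ ce cv, IsTMCColoring G ce cv ∧ colorsUsed G ce cv = k}

lemma tmc_bddAbove {V : Type*} [Fintype V] (G : SimpleGraph V) :
    BddAbove {k | ∃ ce cv, IsTMCColoring G ce cv ∧ colorsUsed G ce cv = k} := by
  classical
  refine ⟨G.edgeSet.ncard + (Set.univ : Set V).ncard, ?_⟩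
  rintro k ⟨ce, cv, _, rfl⟩
  have h1 : (ce '' G.edgeSet ∪ Set.range cv).ncard
      ≤ (ce '' G.edgeSet).ncard + (Set.range cv).ncard := Set.ncard_union_le _ _
  have h2 : (ce '' G.edgeSet).ncard ≤ G.edgeSet.ncard := Set.ncard_image_le G.edgeSet.toFinite
  have h3 : (Set.range cv).ncard ≤ (Set.univ : Set V).ncard := by
    rw [← Set.image_univ]; exact Set.ncard_image_le Set.finite_univ
  exact le_trans h1 (add_le_add h2 h3)

lemma tmc_nonempty {V : Type*} [Fintype V] (G : SimpleGraph V) (hG : G.Connected) :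
    {k | ∃ ce cv, IsTMCColoring G ce cv ∧ colorsUsed G ce cv = k}.Nonempty := by
  classical
  refine ⟨colorsUsed G (fun _ => 0) (fun _ => 0), fun _ => 0, fun _ => 0, fun u v huv => ?_, rfl⟩
  obtain ⟨w⟩ := hG.preconnected u v
  exact ⟨w.toPath.val, w.toPath.prop, 0, fun _ _ => rfl, fun _ _ => rfl⟩

theorem stmt0 {V : Type*} [Fintype V] (G H : SimpleGraph V)
    (hG : G.Connected) (hH : H.Connected) (hle : H ≤ G) :
    G.edgeSet.ncard - H.edgeSet.ncard + tmc H ≤ tmc G := by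
  classical
  -- obtain an optimal TMC-coloring of H
  have hmemH : tmc H ∈ {k | ∃ ce cv, IsTMCColoring H ce cv ∧ colorsUsed H ce cv = k} :=
    Nat.sSup_mem (tmc_nonempty H hH) (tmc_bddAbove H)
  obtain ⟨ce, cv, hTMC, hcard⟩ := hmemH
  obtain ⟨f, hf⟩ := (countable_iff_exists_injective (Sym2 V)).mp inferInstance
  set D : Set (Sym2 V) := G.edgeSet \ H.edgeSet with hD
  set ce' : Sym2 V → ℕ := fun e => if e ∈ H.edgeSet then 2 * ce e else 2 * f e + 1 with hce'
  set cv' : V → ℕ := fun v => 2 * cv v with hcv'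
  have hEsub : H.edgeSet ⊆ G.edgeSet := edgeSet_mono hle
  -- ce', cv' is a TMC coloring of G
  have hTMC' : IsTMCColoring G ce' cv' := by
    intro u v huv
    obtain ⟨w, hwp, c, hec, hvc⟩ := hTMC u v huv
    refine ⟨w.transfer G (fun e he => hEsub (w.edges_subset_edgeSet he)),
      hwp.transfer _, 2 * c, ?_, ?_⟩
    · intro e he
      rw [Walk.edges_transfer] at he
      have heH : e ∈ H.edgeSet := w.edges_subset_edgeSet he
      simp only [hce', if_pos heH, hec e he]
    · intro x hx
      rw [Walk.support_transfer] at hx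
      simp only [hcv', hvc x hx]
  -- count colors
  have hA : (ce '' H.edgeSet ∪ Set.range cv).ncard = tmc H := hcard
  have hsplit : G.edgeSet = H.edgeSet ∪ D := by
    rw [hD, Set.union_diff_cancel' (le_refl _) hEsub]
  have himg : ce' '' G.edgeSet ∪ Set.range cv'
      = (fun n => 2 * n) '' (ce '' H.edgeSet ∪ Set.range cv)
        ∪ (fun e => 2 * f e + 1) '' D := by
    rw [hsplit, Set.image_union]
    have h1 : ce' '' H.edgeSet = (fun n => 2 * n) '' (ce '' H.edgeSet) := by
      rw [← Set.image_comp]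
      exact Set.image_congr (fun e he => by simp [hce', if_pos he])
    have h2 : ce' '' D = (fun e => 2 * f e + 1) '' D := by
      exact Set.image_congr (fun e he => by simp [hce', hD, if_neg he.2])
    have h3 : Set.range cv' = (fun n => 2 * n) '' Set.range cv := by
      rw [← Set.range_comp]; rfl
    rw [h1, h2, h3, Set.image_union]
    ac_rfl
  have hdisj : Disjoint ((fun n => 2 * n) '' (ce '' H.edgeSet ∪ Set.range cv))
      ((fun e => 2 * f e + 1) '' D) := by
    rw [Set.disjoint_left]
    rintro x ⟨a, _, rfl⟩ ⟨e, _, hx⟩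
    simp only at hx
    omega
  have hfinA : ((ce '' H.edgeSet ∪ Set.range cv)).Finite :=
    ((H.edgeSet.toFinite.image ce).union (Set.finite_range cv))
  have hfinD : D.Finite := Set.toFinite D
  have hcount : colorsUsed G ce' cv' = (G.edgeSet.ncard - H.edgeSet.ncard) + tmc H := by
    rw [colorsUsed, himg, Set.ncard_union_eq hdisj (hfinA.image _) (hfinD.image _),
      Set.ncard_image_of_injective _ (fun a b h => by simp only at h; omega : Function.Injective (fun n => 2 * n)),
      Set.ncard_image_of_injOn (fun a _ b _ h => hf (by have h' : 2 * f a + 1 = 2 * f b + 1 := h; omega)), hA,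
      hD, Set.ncard_diff hEsub H.edgeSet.toFinite]
    ring
  exact hcount ▸ le_csSup (tmc_bddAbove G) ⟨ce', cv', hTMC', rfl⟩
end

section
/- For every connected graph G with n vertices and m edges, tmc(G) ≥ m − n + 2 + l(G). -/
/-!
Take a spanning tree `T` of `G` with the maximum number of leaves. Color all edges of `T` and all
non-leaf vertices with one color, and give each of the `m - (n - 1)` edges outside `T` and each leaf
of `T` a fresh color of its own. Any two vertices are joined by their path in `T`, whose internal
vertices are not leaves, so this is a TMC-coloring with `1 + (m - n + 1) + l(G)` colors.
-/

open SimpleGraph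

/-- The number of leaves (vertices of degree one) of a graph. -/
noncomputable def numLeaves {V : Type*} (T : SimpleGraph V) : ℕ :=
  {v : V | (T.neighborSet v).ncard = 1}.ncard

/-- `maxLeaves G` is the maximum number of leaves over all spanning trees of `G`. -/
noncomputable def maxLeaves {V : Type*} [Fintype V] (G : SimpleGraph V) : ℕ :=
  sSup {k | ∃ T : SimpleGraph V, T ≤ G ∧ T.IsTree ∧ numLeaves T = k}


namespace SimpleGraph

variable {V : Type*}

lemma IsTree.ncard_edgeSet_add_one [Fintype V] {T : SimpleGraph V} (hT : T.IsTree) :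
    T.edgeSet.ncard + 1 = Fintype.card V := by
  classical
  rw [← coe_edgeFinset, Set.ncard_coe_finset]
  exact hT.card_edgeFinset

lemma Walk.IsPath.exists_adj_adj_of_mem_internal {T : SimpleGraph V} {u v x : V}
    {p : T.Walk u v} (hp : p.IsPath) (hx : x ∈ p.support.tail.dropLast) :
    ∃ a b, a ≠ b ∧ T.Adj x a ∧ T.Adj x b := by
  induction p with
  | nil => simp at hx
  | @cons u w v h q ih =>
    rw [Walk.support_cons, List.tail_cons] at hx
    cases q with
    | nil => simp at hx
    | @cons w y v h' r =>
      rw [Walk.support_cons, List.dropLast_cons_of_ne_nil r.support_ne_nil] at hx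
      rcases List.mem_cons.mp hx with rfl | hx
      · refine ⟨u, y, ?_, h.symm, h'⟩
        rintro rfl
        exact (Walk.cons_isPath_iff _ _).mp hp |>.2 (by simp)
      · exact ih hp.of_cons (by rwa [Walk.support_cons, List.tail_cons])

def leafSet (T : SimpleGraph V) : Set V :=
  {v | (T.neighborSet v).ncard = 1}

lemma Walk.IsPath.notMem_leafSet_of_mem_internal {T : SimpleGraph V} {u v x : V}
    {p : T.Walk u v} (hp : p.IsPath) (hx : x ∈ p.support.tail.dropLast) :
    x ∉ T.leafSet := by
  obtain ⟨a, b, hab, ha, hb⟩ := hp.exists_adj_adj_of_mem_internal hx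
  intro hleaf
  obtain ⟨c, hc⟩ := Set.ncard_eq_one.mp hleaf
  have ha' : a ∈ T.neighborSet x := ha
  have hb' : b ∈ T.neighborSet x := hb
  rw [hc, Set.mem_singleton_iff] at ha' hb'
  exact hab (ha'.trans hb'.symm)

end SimpleGraph

open SimpleGraph

section TreeColoring

variable {V : Type*} (T : SimpleGraph V)

/- The total coloring attached to a spanning tree `T`: edges of `T` and non-leaves get color `0`,
every other edge gets its own even color and every leaf its own odd color. -/

open Classical in
noncomputable def treeEdgeColoring (fE : Sym2 V → ℕ) (e : Sym2 V) : ℕ :=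
  if e ∈ T.edgeSet then 0 else 2 * fE e + 2

open Classical in
noncomputable def treeVertexColoring (fV : V → ℕ) (v : V) : ℕ :=
  if v ∈ T.leafSet then 2 * fV v + 1 else 0

variable {T} {G : SimpleGraph V}

/-- Tree paths are total monochromatic in color `0`: their internal vertices are not leaves. -/
lemma isTMCColoring_treeColoring (hTG : T ≤ G) (hT : T.Preconnected) (fE : Sym2 V → ℕ)
    (fV : V → ℕ) : IsTMCColoring G (treeEdgeColoring T fE) (treeVertexColoring T fV) := by
  classical
  intro u v _
  obtain ⟨w⟩ := hT u v
  let p := w.toPath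
  have hpG : ∀ e ∈ p.1.edges, e ∈ G.edgeSet := fun e he ↦
    edgeSet_mono hTG (p.1.edges_subset_edgeSet he)
  refine ⟨p.1.transfer G hpG, p.2.transfer hpG, 0, fun e he ↦ ?_, fun x hx ↦ ?_⟩
  · rw [Walk.edges_transfer] at he
    simp [treeEdgeColoring, p.1.edges_subset_edgeSet he]
  · rw [Walk.support_transfer] at hx
    simp [treeVertexColoring, p.2.notMem_leafSet_of_mem_internal hx]

lemma zero_mem_treeColors [Nonempty V] (hTG : T ≤ G) (fE : Sym2 V → ℕ) (fV : V → ℕ) :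
    0 ∈ treeEdgeColoring T fE '' G.edgeSet ∪ Set.range (treeVertexColoring T fV) := by
  obtain ⟨y⟩ := ‹Nonempty V›
  by_cases hy : y ∈ T.leafSet
  · obtain ⟨z, hz⟩ := Set.ncard_eq_one.mp hy
    have hyz : T.Adj y z := show z ∈ T.neighborSet y by simp [hz]
    exact Or.inl ⟨s(y, z), edgeSet_mono hTG hyz, by simp [treeEdgeColoring, hyz]⟩
  · exact Or.inr ⟨y, by simp [treeVertexColoring, hy]⟩

lemma le_colorsUsed_treeColoring [Finite V] [Nonempty V] (hTG : T ≤ G) {fE : Sym2 V → ℕ}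
    {fV : V → ℕ} (hfE : fE.Injective) (hfV : fV.Injective) :
    1 + (G.edgeSet \ T.edgeSet).ncard + T.leafSet.ncard ≤
      colorsUsed G (treeEdgeColoring T fE) (treeVertexColoring T fV) := by
  set A := (fun e ↦ 2 * fE e + 2) '' (G.edgeSet \ T.edgeSet)
  set B := (fun v ↦ 2 * fV v + 1) '' T.leafSet
  have hA : A.ncard = (G.edgeSet \ T.edgeSet).ncard :=
    Set.ncard_image_of_injective _ fun e₁ e₂ h ↦ hfE (by simpa using h)
  have hB : B.ncard = T.leafSet.ncard :=
    Set.ncard_image_of_injective _ fun v₁ v₂ h ↦ hfV (by simpa using h)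
  have hAB : Disjoint A B := by
    rw [Set.disjoint_left]
    rintro _ ⟨e, -, rfl⟩ ⟨v, -, h⟩
    simp only at h
    omega
  have hzero : 0 ∉ A ∪ B := by
    rintro (⟨e, -, h⟩ | ⟨v, -, h⟩) <;> simp at h
  have hsub : insert 0 (A ∪ B) ⊆
      treeEdgeColoring T fE '' G.edgeSet ∪ Set.range (treeVertexColoring T fV) := by
    rintro c (rfl | ⟨e, he, rfl⟩ | ⟨v, hv, rfl⟩)
    · exact zero_mem_treeColors hTG fE fV
    · exact Or.inl ⟨e, he.1, by simp [treeEdgeColoring, he.2]⟩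
    · exact Or.inr ⟨v, by simp [treeVertexColoring, hv]⟩
  calc 1 + (G.edgeSet \ T.edgeSet).ncard + T.leafSet.ncard
      = (insert 0 (A ∪ B)).ncard := by
        rw [Set.ncard_insert_of_notMem hzero, Set.ncard_union_eq hAB, hA, hB]; ring
    _ ≤ colorsUsed G (treeEdgeColoring T fE) (treeVertexColoring T fV) :=
        Set.ncard_le_ncard hsub

end TreeColoring

lemma colorsUsed_le_tmc {V : Type*} [Fintype V] {G : SimpleGraph V} {ce : Sym2 V → ℕ}
    {cv : V → ℕ} (h : IsTMCColoring G ce cv) : colorsUsed G ce cv ≤ tmc G := by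
  refine le_csSup (s := {k | ∃ ce cv, IsTMCColoring G ce cv ∧ colorsUsed G ce cv = k})
    ⟨Nat.card (Sym2 V) + Nat.card V, ?_⟩ ⟨ce, cv, h, rfl⟩
  rintro _ ⟨ce', cv', -, rfl⟩
  calc colorsUsed G ce' cv' ≤ (ce' '' G.edgeSet).ncard + (cv' '' Set.univ).ncard := by
        rw [Set.image_univ]; exact Set.ncard_union_le _ _
    _ ≤ Nat.card (Sym2 V) + Nat.card V := by
        gcongr
        · exact (Set.ncard_image_le).trans (Set.ncard_le_card _)
        · exact (Set.ncard_image_le).trans (Set.ncard_le_card _)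

lemma SimpleGraph.Connected.exists_isTree_numLeaves_eq_maxLeaves {V : Type*} [Fintype V]
    {G : SimpleGraph V} (hG : G.Connected) :
    ∃ T ≤ G, T.IsTree ∧ numLeaves T = maxLeaves G := by
  obtain ⟨T, hTG, hT⟩ := hG.exists_isTree_le
  refine Nat.sSup_mem (s := {k | ∃ T ≤ G, T.IsTree ∧ numLeaves T = k}) ⟨_, T, hTG, hT, rfl⟩
    ⟨Nat.card V, ?_⟩
  rintro _ ⟨T, -, -, rfl⟩
  exact Set.ncard_le_card _

theorem stmt1 {V : Type*} [Fintype V] (G : SimpleGraph V) (hG : G.Connected) :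
    (G.edgeSet.ncard : ℤ) - (Fintype.card V : ℤ) + 2 + (maxLeaves G : ℤ) ≤ (tmc G : ℤ) := by
  obtain ⟨T, hTG, hT, hleaves⟩ := hG.exists_isTree_numLeaves_eq_maxLeaves
  obtain ⟨fE, hfE⟩ := Countable.exists_injective_nat (Sym2 V)
  obtain ⟨fV, hfV⟩ := Countable.exists_injective_nat V
  have : Nonempty V := hG.nonempty
  have hcolors := le_colorsUsed_treeColoring hTG hfE hfV
  have htmc := colorsUsed_le_tmc (isTMCColoring_treeColoring hTG hT.connected.preconnected fE fV)
  have hT_edges := hT.ncard_edgeSet_add_one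
  have hG_edges := Set.ncard_sdiff_add_ncard_of_subset (edgeSet_mono hTG)
  rw [← hleaves]
  change 1 + _ + numLeaves T ≤ _ at hcolors
  omega
end

section
/- For a connected graph G with n vertices and m edges, tmc(G) = m + n if and only if G is a complete graph. -/
open SimpleGraph

/-
Colouring the edges and vertices of `K_n` injectively gives a TMC-colouring with `m + n` colours,
since every pair of vertices is joined by a single edge and such a path has no internal vertex.
Conversely, if `u ≠ v` are non-adjacent, the monochromatic `u`-`v` path of a TMC-colouring has at
least two edges, which share a colour, so at most `m - 1` colours appear on edges.
-/

lemma Set.ncard_range_le_card {α β : Type*} [Fintype α] (f : α → β) :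
    (Set.range f).ncard ≤ Fintype.card α := by
  simpa [Set.ncard_univ] using Set.ncard_image_le (f := f) (Set.toFinite Set.univ)

namespace SimpleGraph.Walk

variable {V : Type*} {G : SimpleGraph V}

lemma IsTrail.exists_mem_edges_ne {u v : V} {w : G.Walk u v} (hw : w.IsTrail) (huv : u ≠ v)
    (hadj : ¬G.Adj u v) : ∃ e₁ ∈ w.edges, ∃ e₂ ∈ w.edges, e₁ ≠ e₂ := by
  classical
  have hlen : 1 < w.length := by
    by_contra! h
    interval_cases hl : w.length
    · exact huv (w.eq_of_length_eq_zero hl)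
    · exact hadj (w.adj_of_length_eq_one hl)
  rw [← length_edges, ← List.toFinset_card_of_nodup hw.edges_nodup, Finset.one_lt_card] at hlen
  simpa using hlen

end SimpleGraph.Walk

section TotalColoring

variable {V : Type*} (G : SimpleGraph V)

lemma isTMCColoring_const (hG : G.Connected) (c : ℕ) :
    IsTMCColoring G (fun _ ↦ c) (fun _ ↦ c) := by
  classical
  intro u v _
  obtain ⟨w⟩ := hG.preconnected u v
  exact ⟨w.toPath, w.toPath.2, c, fun _ _ ↦ rfl, fun _ _ ↦ rfl⟩

lemma isTMCColoring_top (ce : Sym2 V → ℕ) (cv : V → ℕ) : IsTMCColoring ⊤ ce cv := by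
  intro u v huv
  refine ⟨(Walk.nil : (⊤ : SimpleGraph V).Walk v v).cons huv, by simp [huv], ce s(u, v), ?_, ?_⟩ <;>
    simp

variable [Fintype V]

lemma colorsUsed_le (ce : Sym2 V → ℕ) (cv : V → ℕ) :
    colorsUsed G ce cv ≤ G.edgeSet.ncard + Fintype.card V :=
  (Set.ncard_union_le _ _).trans <|
    Nat.add_le_add (Set.ncard_image_le (Set.toFinite _)) (Set.ncard_range_le_card cv)

lemma colorsUsed_lt_of_color_eq {ce : Sym2 V → ℕ} (cv : V → ℕ) {e₁ e₂ : Sym2 V}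
    (he₁ : e₁ ∈ G.edgeSet) (he₂ : e₂ ∈ G.edgeSet) (hne : e₁ ≠ e₂) (hc : ce e₁ = ce e₂) :
    colorsUsed G ce cv < G.edgeSet.ncard + Fintype.card V := by
  have himage : ce '' G.edgeSet = ce '' (G.edgeSet \ {e₁}) := by
    refine (Set.image_mono Set.sdiff_subset).antisymm' ?_
    rintro _ ⟨e, he, rfl⟩
    by_cases h : e = e₁
    · exact ⟨e₂, ⟨he₂, Ne.symm (h ▸ hne)⟩, h ▸ hc.symm⟩
    · exact ⟨e, ⟨he, h⟩, rfl⟩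
  have hedges : (ce '' G.edgeSet).ncard < G.edgeSet.ncard := by
    rw [himage]
    calc (ce '' (G.edgeSet \ {e₁})).ncard ≤ (G.edgeSet \ {e₁}).ncard :=
          Set.ncard_image_le (Set.toFinite _)
      _ < G.edgeSet.ncard := Set.ncard_sdiff_singleton_lt_of_mem he₁
  exact (Set.ncard_union_le _ _).trans_lt
    (Nat.add_lt_add_of_lt_of_le hedges (Set.ncard_range_le_card cv))

lemma colorsUsed_comp_inl_inr {f : Sym2 V ⊕ V → ℕ} (hf : Function.Injective f) :
    colorsUsed G (f ∘ Sum.inl) (f ∘ Sum.inr) = G.edgeSet.ncard + Fintype.card V := by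
  have hdisj : Disjoint ((f ∘ Sum.inl) '' G.edgeSet) (Set.range (f ∘ Sum.inr)) := by
    rw [Set.disjoint_left]
    rintro _ ⟨e, _, rfl⟩ ⟨v, hv⟩
    exact Sum.inr_ne_inl (hf hv)
  rw [colorsUsed, Set.ncard_union_eq hdisj (Set.toFinite _) (Set.toFinite _),
    Set.ncard_image_of_injective _ (hf.comp Sum.inl_injective),
    Set.ncard_range_of_injective (hf.comp Sum.inr_injective), Nat.card_eq_fintype_card]

lemma mem_upperBounds_tmc_set :
    G.edgeSet.ncard + Fintype.card V ∈
      upperBounds {k | ∃ ce cv, IsTMCColoring G ce cv ∧ colorsUsed G ce cv = k} := by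
  rintro _ ⟨ce, cv, -, rfl⟩
  exact colorsUsed_le G ce cv

lemma tmc_le : tmc G ≤ G.edgeSet.ncard + Fintype.card V :=
  csSup_le' (mem_upperBounds_tmc_set G)

lemma le_tmc {ce : Sym2 V → ℕ} {cv : V → ℕ} (h : IsTMCColoring G ce cv) :
    colorsUsed G ce cv ≤ tmc G :=
  le_csSup ⟨_, mem_upperBounds_tmc_set G⟩ ⟨ce, cv, h, rfl⟩

lemma exists_colorsUsed_eq_tmc (hG : G.Connected) :
    ∃ ce cv, IsTMCColoring G ce cv ∧ colorsUsed G ce cv = tmc G :=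
  Nat.sSup_mem (s := {k | ∃ ce cv, IsTMCColoring G ce cv ∧ colorsUsed G ce cv = k})
    ⟨_, _, _, isTMCColoring_const G hG 0, rfl⟩ ⟨_, mem_upperBounds_tmc_set G⟩

lemma tmc_lt_of_not_adj (hG : G.Connected) {u v : V} (huv : u ≠ v) (hadj : ¬G.Adj u v) :
    tmc G < G.edgeSet.ncard + Fintype.card V := by
  obtain ⟨ce, cv, hTMC, hmax⟩ := exists_colorsUsed_eq_tmc G hG
  obtain ⟨w, hw, c, hce, -⟩ := hTMC u v huv
  obtain ⟨e₁, he₁, e₂, he₂, hne⟩ := hw.isTrail.exists_mem_edges_ne huv hadj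
  rw [← hmax]
  exact colorsUsed_lt_of_color_eq G cv (w.edges_subset_edgeSet he₁) (w.edges_subset_edgeSet he₂)
    hne ((hce e₁ he₁).trans (hce e₂ he₂).symm)

end TotalColoring

theorem stmt9 {V : Type*} [Fintype V] (G : SimpleGraph V) (hG : G.Connected) :
    tmc G = G.edgeSet.ncard + Fintype.card V ↔ G = ⊤ := by
  constructor
  · intro h
    by_contra hne
    obtain ⟨u, v, huv, hadj⟩ := ne_top_iff_exists_not_adj.mp hne
    exact (tmc_lt_of_not_adj G hG huv hadj).ne h
  · rintro rfl
    obtain ⟨f, hf⟩ := exists_injective_nat (Sym2 V ⊕ V)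
    exact (tmc_le _).antisymm <|
      (colorsUsed_comp_inl_inr _ hf).symm.le.trans (le_tmc _ (isTMCColoring_top _ _))
end

section
/- Every connected graph G has a simple extremal TMC-coloring; that is, a TMC-coloring of G using exactly tmc(G) colors in which, for any two nontrivial colors c and d, the color trees T_c and T_d intersect in at most one vertex. -/
open SimpleGraph

/-!
Among the extremal TMC-colorings choose one with the fewest nontrivial colors.

In an extremal coloring the edges of a color `c` cannot split into two nonempty parts that meet
only at vertices whose color is not `c`: the second part could be given a fresh color. Hence any
two vertices of `T_c` are joined by a walk through `c`-edges and inner vertices of color `c`, and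
a nontrivial color `c` is the color of some vertex of `T_c`.

If the trees of two nontrivial colors `c ≠ d` shared two vertices, we find a set `A ∋ c, d` of
colors and a set `D` of `|A| - 1` edges of color `d` such that each edge of `D` can be bypassed by
a walk through edges and inner vertices with colors in `A` avoiding `D`. Merging the colors of `A`
into `c` and giving the edges of `D` fresh colors keeps the TMC property and the number of colors,
but decreases the number of nontrivial colors.
-/

namespace SimpleGraph.Walk

variable {V : Type*} {G : SimpleGraph V} {x y z : V}

lemma mem_support_tail_dropLast (w : G.Walk x y) (hz : z ∈ w.support) (hx : z ≠ x)
    (hy : z ≠ y) : z ∈ w.support.tail.dropLast := by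
  cases w with
  | nil => simp_all
  | cons h p =>
    rw [support_cons, List.tail_cons]
    have hz : z ∈ p.support.dropLast ++ [y] := by
      rw [p.dropLast_support_concat]; simpa [hx] using hz
    rcases List.mem_append.1 hz with hz | hz
    · exact hz
    · exact absurd (List.mem_singleton.1 hz) hy

lemma IsPath.ne_of_mem_support_tail_dropLast {w : G.Walk x y} (hw : w.IsPath)
    (hz : z ∈ w.support.tail.dropLast) : z ≠ x ∧ z ≠ y := by
  cases w with
  | nil => simp at hz
  | cons h p =>
    rw [cons_isPath_iff] at hw
    rw [support_cons, List.tail_cons] at hz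
    have hnd := hw.1.support_nodup
    rw [← p.dropLast_support_concat, List.nodup_append] at hnd
    refine ⟨fun hzx => hw.2 (hzx ▸ List.mem_of_mem_dropLast hz), fun hzy => ?_⟩
    exact hnd.2.2 z hz y (List.mem_singleton_self y) hzy

lemma exists_mem_edges_of_mem_support_tail_dropLast (w : G.Walk x y)
    (hz : z ∈ w.support.tail.dropLast) : ∃ e ∈ w.edges, z ∈ e := by
  cases w with
  | nil => simp at hz
  | cons h p =>
    refine (mem_support_iff_exists_mem_edges_of_not_nil not_nil_cons).1 ?_
    exact List.mem_cons_of_mem _ (List.mem_of_mem_dropLast hz)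

end SimpleGraph.Walk

namespace TMC

variable {V : Type*} {G : SimpleGraph V}

section WalkIn

/-- With `P = (ce · = c)` and `Q = (cv · = c)` this is the total monochromatic condition for walks
that need not be paths; the ends are exempt wherever they occur on `w`. -/
def WalkIn (P : Sym2 V → Prop) (Q : V → Prop) {x y : V} (w : G.Walk x y) : Prop :=
  (∀ e ∈ w.edges, P e) ∧ ∀ z ∈ w.support, z = x ∨ z = y ∨ Q z

variable {P : Sym2 V → Prop} {Q : V → Prop} {x y z : V}

lemma WalkIn.append {w₁ : G.Walk x y} {w₂ : G.Walk y z} (h₁ : WalkIn P Q w₁)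
    (h₂ : WalkIn P Q w₂) (hy : Q y) : WalkIn P Q (w₁.append w₂) := by
  refine ⟨fun e he => ?_, fun v hv => ?_⟩
  · rcases List.mem_append.1 (Walk.edges_append _ _ ▸ he) with he | he
    exacts [h₁.1 e he, h₂.1 e he]
  · rcases List.mem_append.1 (Walk.support_append _ _ ▸ hv) with hv | hv
    · rcases h₁.2 v hv with rfl | rfl | hv <;> simp_all
    · rcases h₂.2 v (List.mem_of_mem_tail hv) with rfl | rfl | hv <;> simp_all

lemma WalkIn.reverse {w : G.Walk x y} (hw : WalkIn P Q w) : WalkIn P Q w.reverse := by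
  refine ⟨fun e he => hw.1 e (by simpa using he), fun v hv => ?_⟩
  rcases hw.2 v (by simpa using hv) with h | h | h <;> simp [h]

lemma WalkIn.bypass [DecidableEq V] {w : G.Walk x y} (hw : WalkIn P Q w) :
    WalkIn P Q w.bypass :=
  ⟨fun e he => hw.1 e (w.edges_bypass_subset_edges he),
    fun v hv => hw.2 v (w.support_bypass_subset_support hv)⟩

lemma WalkIn.of_cons {u : V} {h : G.Adj u x} {w : G.Walk x y} (hw : WalkIn P Q (w.cons h))
    (hu : u ∉ w.support) : WalkIn P Q w := by
  refine ⟨fun e he => hw.1 e (List.mem_cons_of_mem _ he), fun v hv => ?_⟩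
  rcases hw.2 v (List.mem_cons_of_mem _ hv) with rfl | h | h
  exacts [absurd hv hu, Or.inr (Or.inl h), Or.inr (Or.inr h)]

lemma WalkIn.notMem_edges {w : G.Walk x y} (hw : WalkIn P Q w) (hzx : z ≠ x) (hzy : z ≠ y)
    (hz : ¬Q z) {e : Sym2 V} (hze : z ∈ e) : e ∉ w.edges := fun he => by
  rcases hw.2 z (w.mem_support_iff_exists_mem_edges.2 (Or.inr ⟨e, he, hze⟩)) with h | h | h
  exacts [hzx h, hzy h, hz h]

lemma exists_walkIn_of_mem_edge {e : Sym2 V} (he : e ∈ G.edgeSet) (hP : P e) (hx : x ∈ e)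
    (hy : y ∈ e) : ∃ w : G.Walk x y, WalkIn P Q w := by
  by_cases hxy : x = y
  · subst hxy
    exact ⟨Walk.nil, by simp, by simp⟩
  · rw [(Sym2.mem_and_mem_iff hxy).1 ⟨hx, hy⟩] at he hP
    refine ⟨Walk.cons (G.mem_edgeSet.1 he) Walk.nil, by simpa using hP, fun v hv => ?_⟩
    simp only [Walk.support_cons, Walk.support_nil, List.mem_cons, List.not_mem_nil,
      or_false] at hv
    tauto

lemma exists_walkIn_of_sym2_eq {x' y' : V} (h : s(x', y') = s(x, y))
    (hw : ∃ w : G.Walk x y, WalkIn P Q w) : ∃ w : G.Walk x' y', WalkIn P Q w := by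
  obtain ⟨w, hw⟩ := hw
  rcases Sym2.eq_iff.1 h with ⟨rfl, rfl⟩ | ⟨rfl, rfl⟩
  exacts [⟨w, hw⟩, ⟨w.reverse, hw.reverse⟩]

end WalkIn

variable {ce : Sym2 V → ℕ} {cv : V → ℕ} {c d : ℕ}

lemma isTMCColoring_iff : IsTMCColoring G ce cv ↔
    ∀ x y, x ≠ y → ∃ c, ∃ w : G.Walk x y, WalkIn (ce · = c) (cv · = c) w := by
  classical
  refine ⟨fun h x y hxy => ?_, fun h x y hxy => ?_⟩
  · obtain ⟨w, -, c, hce, hcv⟩ := h x y hxy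
    refine ⟨c, w, hce, fun z hz => ?_⟩
    by_cases hzx : z = x; · exact Or.inl hzx
    by_cases hzy : z = y; · exact Or.inr (Or.inl hzy)
    exact Or.inr (Or.inr (hcv z (w.mem_support_tail_dropLast hz hzx hzy)))
  · obtain ⟨c, w, hw⟩ := h x y hxy
    refine ⟨w.bypass, w.bypass_isPath, c, hw.bypass.1, fun z hz => ?_⟩
    have hne := w.bypass_isPath.ne_of_mem_support_tail_dropLast hz
    rcases hw.bypass.2 z (List.mem_of_mem_tail (List.mem_of_mem_dropLast hz)) with h | h | h
    exacts [absurd h hne.1, absurd h hne.2, h]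

-- The edge and vertex sets of the color tree `T_c`.
def colorClass (G : SimpleGraph V) (ce : Sym2 V → ℕ) (c : ℕ) : Set (Sym2 V) :=
  {e ∈ G.edgeSet | ce e = c}

def colorVerts (G : SimpleGraph V) (ce : Sym2 V → ℕ) (c : ℕ) : Set V :=
  {v | ∃ e ∈ G.edgeSet, ce e = c ∧ v ∈ e}

def nontrivialColors (G : SimpleGraph V) (ce : Sym2 V → ℕ) : Set ℕ :=
  {c | 2 ≤ (colorClass G ce c).ncard}

def usedColors (G : SimpleGraph V) (ce : Sym2 V → ℕ) (cv : V → ℕ) : Set ℕ :=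
  ce '' G.edgeSet ∪ Set.range cv

lemma colorsUsed_eq_ncard : colorsUsed G ce cv = (usedColors G ce cv).ncard := rfl

lemma usedColors_finite [Finite V] : (usedColors G ce cv).Finite :=
  (G.edgeSet.toFinite.image ce).union (Set.finite_range cv)

lemma colorClass_nonempty (hc : c ∈ nontrivialColors G ce) : (colorClass G ce c).Nonempty :=
  Set.nonempty_of_ncard_ne_zero (by simp only [nontrivialColors, Set.mem_ofPred_eq] at hc; omega)

lemma nontrivialColors_finite [Finite V] : (nontrivialColors G ce).Finite := by
  refine (G.edgeSet.toFinite.image ce).subset fun c hc => ?_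
  obtain ⟨e, he, hec⟩ := colorClass_nonempty hc
  exact ⟨e, he, hec⟩

lemma mem_colorVerts_of_walk {x y : V} {w : G.Walk x y} (hxy : x ≠ y)
    (hw : ∀ e ∈ w.edges, ce e = c) : x ∈ colorVerts G ce c ∧ y ∈ colorVerts G ce c := by
  have hnil : ¬w.Nil := fun h => hxy h.eq
  have key : ∀ z ∈ w.support, z ∈ colorVerts G ce c := fun z hz => by
    obtain ⟨e, he, hze⟩ := (Walk.mem_support_iff_exists_mem_edges_of_not_nil hnil).1 hz
    exact ⟨e, w.edges_subset_edgeSet he, hw e he, hze⟩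
  exact ⟨key x w.start_mem_support, key y w.end_mem_support⟩

section Extremal

variable [Fintype V]

lemma colorsUsed_le_card (ce : Sym2 V → ℕ) (cv : V → ℕ) :
    colorsUsed G ce cv ≤ Nat.card (Sym2 V) + Nat.card V :=
  calc colorsUsed G ce cv ≤ (ce '' G.edgeSet).ncard + (Set.range cv).ncard :=
        Set.ncard_union_le _ _
    _ ≤ Nat.card (Sym2 V) + Nat.card V := by
        gcongr
        · exact (Set.ncard_image_le G.edgeSet.toFinite).trans (Set.ncard_le_card _)
        · rw [← Set.image_univ]
          exact (Set.ncard_image_le Set.finite_univ).trans (Set.ncard_le_card _)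

lemma colorsUsed_le_tmc (h : IsTMCColoring G ce cv) : colorsUsed G ce cv ≤ tmc G :=
  le_csSup ⟨_, by rintro k ⟨ce, cv, -, rfl⟩; exact colorsUsed_le_card ce cv⟩ ⟨ce, cv, h, rfl⟩

def IsExtremal (G : SimpleGraph V) (ce : Sym2 V → ℕ) (cv : V → ℕ) : Prop :=
  IsTMCColoring G ce cv ∧ colorsUsed G ce cv = tmc G

lemma exists_isExtremal (hG : G.Connected) : ∃ ce cv, IsExtremal G ce cv := by
  obtain ⟨ce, cv, h⟩ : tmc G ∈ {k | ∃ ce cv, IsTMCColoring G ce cv ∧ colorsUsed G ce cv = k} := by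
    refine Nat.sSup_mem ⟨_, fun _ => 0, fun _ => 0, fun u v _ => ?_, rfl⟩
      ⟨_, by rintro k ⟨ce, cv, -, rfl⟩; exact colorsUsed_le_card ce cv⟩
    classical
    obtain ⟨w⟩ := hG.preconnected u v
    exact ⟨w.bypass, w.bypass_isPath, 0, by simp, by simp⟩
  exact ⟨ce, cv, h⟩

lemma IsExtremal.of_colorsUsed_le {ce' : Sym2 V → ℕ} {cv' : V → ℕ} (h : IsExtremal G ce cv)
    (h' : IsTMCColoring G ce' cv') (hle : colorsUsed G ce cv ≤ colorsUsed G ce' cv') :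
    IsExtremal G ce' cv' :=
  ⟨h', le_antisymm (colorsUsed_le_tmc h') (h.2 ▸ hle)⟩

lemma IsExtremal.colorsUsed_not_lt {ce' : Sym2 V → ℕ} {cv' : V → ℕ} (h : IsExtremal G ce cv)
    (h' : IsTMCColoring G ce' cv') : ¬colorsUsed G ce cv < colorsUsed G ce' cv' :=
  not_lt.2 (h.2 ▸ (colorsUsed_le_tmc h'))

end Extremal

section Split

def IsInnerClosed (G : SimpleGraph V) (ce : Sym2 V → ℕ) (cv : V → ℕ) (c : ℕ)
    (S : Set (Sym2 V)) : Prop :=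
  ∀ e ∈ colorClass G ce c, ∀ f ∈ colorClass G ce c, ∀ z, cv z = c → z ∈ e → z ∈ f → e ∈ S → f ∈ S

variable {S : Set (Sym2 V)}

lemma IsInnerClosed.mem_iff_of_mem_edges (hS : IsInnerClosed G ce cv c S) {x y : V}
    (w : G.Walk x y) (hce : ∀ e ∈ w.edges, ce e = c)
    (hcv : ∀ z ∈ w.support.tail.dropLast, cv z = c) {e f : Sym2 V} (he : e ∈ w.edges)
    (hf : f ∈ w.edges) : e ∈ S ↔ f ∈ S := by
  induction w generalizing e f with
  | nil => simp at he
  | @cons u x₂ y h p ih =>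
    cases p with
    | nil => simp_all
    | @cons _ x₃ _ h₂ p₂ =>
      have hclass : ∀ g ∈ (Walk.cons h (Walk.cons h₂ p₂)).edges, g ∈ colorClass G ce c :=
        fun g hg => ⟨Walk.edges_subset_edgeSet _ hg, hce g hg⟩
      have hx₂ : cv x₂ = c := hcv x₂ (by simp [List.dropLast_cons_of_ne_nil])
      have hce' : ∀ g ∈ (Walk.cons h₂ p₂).edges, ce g = c :=
        fun g hg => hce g (List.mem_cons_of_mem _ hg)
      have hcv' : ∀ z ∈ (Walk.cons h₂ p₂).support.tail.dropLast, cv z = c := fun z hz => hcv z (by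
        simp only [Walk.support_cons, List.tail_cons] at hz ⊢
        rw [List.dropLast_cons_of_ne_nil (Walk.support_ne_nil _)]
        exact List.mem_cons_of_mem _ hz)
      have hstep : s(u, x₂) ∈ S ↔ s(x₂, x₃) ∈ S :=
        ⟨hS _ (hclass _ (by simp)) _ (hclass _ (by simp)) x₂ hx₂ (by simp) (by simp),
          hS _ (hclass _ (by simp)) _ (hclass _ (by simp)) x₂ hx₂ (by simp) (by simp)⟩
      have key : ∀ g ∈ (Walk.cons h (Walk.cons h₂ p₂)).edges, g ∈ S ↔ s(x₂, x₃) ∈ S := by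
        intro g hg
        rcases List.mem_cons.1 hg with rfl | hg
        exacts [hstep, ih hce' hcv' (e := g) (f := s(x₂, x₃)) hg (by simp)]
      exact (key e he).trans (key f hf).symm

open Classical in
noncomputable def recolorEdges (ce : Sym2 V → ℕ) (S : Set (Sym2 V)) (c' : ℕ) : Sym2 V → ℕ :=
  fun e => if e ∈ S then c' else ce e

open Classical in
noncomputable def recolorVerts (cv : V → ℕ) (c : ℕ) (S : Set (Sym2 V)) (c' : ℕ) : V → ℕ :=
  fun v => if cv v = c ∧ ∃ e ∈ S, v ∈ e then c' else cv v

theorem isTMCColoring_recolor (h : IsTMCColoring G ce cv) (hS : IsInnerClosed G ce cv c S)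
    (hSc : S ⊆ colorClass G ce c) (c' : ℕ) :
    IsTMCColoring G (recolorEdges ce S c') (recolorVerts cv c S c') := by
  intro x y hxy
  obtain ⟨w, hp, c₀, hce, hcv⟩ := h x y hxy
  refine ⟨w, hp, ?_⟩
  have hclass : ∀ g ∈ w.edges, ce g = c → g ∈ colorClass G ce c :=
    fun g hg hgc => ⟨Walk.edges_subset_edgeSet _ hg, hgc⟩
  by_cases hc₀ : c₀ = c
  · subst hc₀
    by_cases hin : ∃ g ∈ w.edges, g ∈ S
    · obtain ⟨g₀, hg₀, hg₀S⟩ := hin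
      have hall : ∀ g ∈ w.edges, g ∈ S :=
        fun g hg => (hS.mem_iff_of_mem_edges w hce hcv hg₀ hg).1 hg₀S
      refine ⟨c', fun g hg => by simp [recolorEdges, hall g hg], fun z hz => ?_⟩
      obtain ⟨g, hg, hzg⟩ := w.exists_mem_edges_of_mem_support_tail_dropLast hz
      rw [recolorVerts, if_pos ⟨hcv z hz, g, hall g hg, hzg⟩]
    · push Not at hin
      refine ⟨c₀, fun g hg => by simp [recolorEdges, hin g hg, hce g hg], fun z hz => ?_⟩
      rw [recolorVerts, if_neg, hcv z hz]
      rintro ⟨-, e, heS, hze⟩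
      obtain ⟨g, hg, hzg⟩ := w.exists_mem_edges_of_mem_support_tail_dropLast hz
      exact hin g hg (hS e (hSc heS) g (hclass g hg (hce g hg)) z (hcv z hz) hze hzg heS)
  · refine ⟨c₀, fun g hg => ?_, fun z hz => ?_⟩
    · have hgS : g ∉ S := fun hgS => hc₀ ((hce g hg).symm.trans (hSc hgS).2)
      simp [recolorEdges, hgS, hce g hg]
    · simp [recolorVerts, hcv z hz, hc₀]

variable [Fintype V]

/-- Otherwise recoloring `S` with a fresh color would give a TMC-coloring with more colors. -/
theorem IsExtremal.not_split (h : IsExtremal G ce cv)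
    (hS : IsInnerClosed G ce cv c S) (hSc : S ⊆ colorClass G ce c) {e f : Sym2 V}
    (he : e ∈ colorClass G ce c) (heS : e ∉ S) (hf : f ∈ S) : False := by
  obtain ⟨N, hN⟩ := (usedColors_finite (G := G) (ce := ce) (cv := cv)).bddAbove
  have hfresh : N + 1 ∉ usedColors G ce cv := fun hN' => by have := hN hN'; omega
  refine h.colorsUsed_not_lt (isTMCColoring_recolor h.1 hS hSc (N + 1)) ?_
  set ce' := recolorEdges ce S (N + 1)
  set cv' := recolorVerts cv c S (N + 1)
  have hc : c ∈ usedColors G ce' cv' := Or.inl ⟨e, he.1, by simp [ce', recolorEdges, heS, he.2]⟩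
  have hsub : insert (N + 1) (usedColors G ce cv) ⊆ usedColors G ce' cv' := by
    rintro a (rfl | ⟨g, hg, rfl⟩ | ⟨v, rfl⟩)
    · classical
      exact Or.inl ⟨f, (hSc hf).1, if_pos hf⟩
    · by_cases hgS : g ∈ S
      · exact (hSc hgS).2 ▸ hc
      · exact Or.inl ⟨g, hg, if_neg hgS⟩
    · by_cases hv : cv v = c ∧ ∃ e ∈ S, v ∈ e
      · exact hv.1 ▸ hc
      · exact Or.inr ⟨v, if_neg hv⟩
  calc colorsUsed G ce cv < (insert (N + 1) (usedColors G ce cv)).ncard := by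
        rw [Set.ncard_insert_of_notMem hfresh usedColors_finite, colorsUsed_eq_ncard]; omega
    _ ≤ colorsUsed G ce' cv' := Set.ncard_le_ncard hsub usedColors_finite

theorem IsExtremal.exists_walkIn (h : IsExtremal G ce cv) {a b : V}
    (ha : a ∈ colorVerts G ce c) (hb : b ∈ colorVerts G ce c) :
    ∃ w : G.Walk a b, WalkIn (ce · = c) (cv · = c) w := by
  obtain ⟨e, heE, hec, hae⟩ := ha
  obtain ⟨f, hfE, hfc, hbf⟩ := hb
  by_contra hno
  let X : Set (Sym2 V) := {g | ∀ b ∈ g, ∃ w : G.Walk a b, WalkIn (ce · = c) (cv · = c) w}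
  have hX : IsInnerClosed G ce cv c (colorClass G ce c \ X) := by
    refine fun g _ g' hg' z hz hzg hzg' hgS => ⟨hg', fun hg'X => hgS.2 fun b hb => ?_⟩
    obtain ⟨w, hw⟩ := hg'X z hzg'
    obtain ⟨w', hw'⟩ :=
      exists_walkIn_of_mem_edge (P := (ce · = c)) (Q := (cv · = c)) hgS.1.1 hgS.1.2 hzg hb
    exact ⟨w.append w', hw.append hw' hz⟩
  refine h.not_split hX Set.sdiff_subset ⟨heE, hec⟩ (fun he => he.2 fun b hb => ?_)
    ⟨⟨hfE, hfc⟩, fun hfX => hno (hfX b hbf)⟩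
  exact exists_walkIn_of_mem_edge heE hec hae hb

theorem IsExtremal.exists_mem_colorVerts_color_eq (h : IsExtremal G ce cv)
    (hc : c ∈ nontrivialColors G ce) : ∃ p ∈ colorVerts G ce c, cv p = c := by
  obtain ⟨e, he, f, hf, hef⟩ := (Set.one_lt_ncard (Set.toFinite _)).1 hc
  by_contra! hno
  refine h.not_split (S := {f}) (fun g hg _ _ z hz hzg _ _ => ?_) (by simpa using hf) he hef rfl
  exact absurd hz (hno z ⟨g, hg.1, hg.2, hzg⟩)

end Split

section Merge

lemma exists_walk_avoiding {P : Sym2 V → Prop} {Q : V → Prop} {D : Set (Sym2 V)}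
    (detour : ∀ e ∈ D, ∃ a b, e = s(a, b) ∧ ∃ w : G.Walk a b, WalkIn (fun f => P f ∧ f ∉ D) Q w)
    {x y : V} (w : G.Walk x y) (hw : ∀ e ∈ w.edges, P e) :
    ∃ w' : G.Walk x y, (∀ e ∈ w'.edges, P e ∧ e ∉ D) ∧ ∀ z ∈ w'.support, z ∈ w.support ∨ Q z := by
  induction w with
  | nil => exact ⟨Walk.nil, by simp, by simp⟩
  | @cons u v y huv p ih =>
    obtain ⟨p', hp'E, hp'V⟩ := ih fun e he => hw e (List.mem_cons_of_mem _ he)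
    have hp'V' : ∀ z ∈ p'.support, z ∈ (Walk.cons huv p).support ∨ Q z :=
      fun z hz => (hp'V z hz).imp_left (List.mem_cons_of_mem _)
    by_cases huvD : s(u, v) ∈ D
    · obtain ⟨a, b, hab, hd⟩ := detour _ huvD
      obtain ⟨d, hdE, hdV⟩ := exists_walkIn_of_sym2_eq hab hd
      refine ⟨d.append p', fun e he => ?_, fun z hz => ?_⟩
      · rcases List.mem_append.1 (Walk.edges_append _ _ ▸ he) with he | he
        exacts [hdE e he, hp'E e he]
      · rcases List.mem_append.1 (Walk.support_append _ _ ▸ hz) with hz | hz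
        · rcases hdV z hz with rfl | rfl | hz <;> simp [hz]
        · exact hp'V' z (List.mem_of_mem_tail hz)
    · refine ⟨Walk.cons huv p', fun e he => ?_, fun z hz => ?_⟩
      · rcases List.mem_cons.1 he with rfl | he
        exacts [⟨hw _ (by simp), huvD⟩, hp'E e he]
      · rcases List.mem_cons.1 hz with rfl | hz
        exacts [Or.inl (by simp), hp'V' z hz]

open Classical in
noncomputable def mergeEdges (ce : Sym2 V → ℕ) (A : Finset ℕ) (c : ℕ) (D : Finset (Sym2 V))
    (fresh : Sym2 V → ℕ) : Sym2 V → ℕ :=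
  fun e => if e ∈ D then fresh e else if ce e ∈ A then c else ce e

def mergeVerts (cv : V → ℕ) (A : Finset ℕ) (c : ℕ) : V → ℕ :=
  fun v => if cv v ∈ A then c else cv v

variable {A : Finset ℕ} {D : Finset (Sym2 V)} {fresh : Sym2 V → ℕ}

lemma mergeEdges_of_notMem {e : Sym2 V} (he : e ∉ D) (hA : ce e ∉ A) :
    mergeEdges ce A c D fresh e = ce e := by
  simp [mergeEdges, he, hA]

lemma mergeVerts_of_notMem {v : V} (hA : cv v ∉ A) : mergeVerts cv A c v = cv v := by
  simp [mergeVerts, hA]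

lemma mergeEdges_eq_of_ne {e : Sym2 V} {a : ℕ} (he : mergeEdges ce A c D fresh e = a)
    (hac : a ≠ c) : (e ∈ D ∧ fresh e = a) ∨ (e ∉ D ∧ ce e ∉ A ∧ ce e = a) := by
  unfold mergeEdges at he
  split_ifs at he <;> simp_all

theorem isTMCColoring_merge (h : IsTMCColoring G ce cv) (c : ℕ) (fresh : Sym2 V → ℕ)
    (hDA : ∀ e ∈ D, ce e ∈ A)
    (detour : ∀ e ∈ D, ∃ a b, e = s(a, b) ∧
      ∃ w : G.Walk a b, WalkIn (fun f => ce f ∈ A ∧ f ∉ D) (fun z => cv z ∈ A) w) :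
    IsTMCColoring G (mergeEdges ce A c D fresh) (mergeVerts cv A c) := by
  rw [isTMCColoring_iff] at h ⊢
  intro x y hxy
  obtain ⟨c₀, w, hwE, hwV⟩ := h x y hxy
  by_cases hc₀ : c₀ ∈ A
  · obtain ⟨w', hw'E, hw'V⟩ := exists_walk_avoiding (P := (ce · ∈ A)) (D := ↑D) detour w
      fun e he => hwE e he ▸ hc₀
    refine ⟨c, w', fun e he => ?_, fun z hz => ?_⟩
    · have heD : e ∉ D := (hw'E e he).2
      simp [mergeEdges, heD, (hw'E e he).1]
    · rcases hw'V z hz with hz | hz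
      · rcases hwV z hz with rfl | rfl | hz
        exacts [Or.inl rfl, Or.inr (Or.inl rfl), Or.inr (Or.inr (by simp [mergeVerts, hz, hc₀]))]
      · exact Or.inr (Or.inr (by simp [mergeVerts, hz]))
  · refine ⟨c₀, w, fun e he => ?_, fun z hz => ?_⟩
    · have hA : ce e ∉ A := hwE e he ▸ hc₀
      dsimp only
      rw [mergeEdges_of_notMem (fun heD => hA (hDA e heD)) hA, hwE e he]
    · rcases hwV z hz with rfl | rfl | hz
      exacts [Or.inl rfl, Or.inr (Or.inl rfl), Or.inr (Or.inr (by simp [mergeVerts, hz, hc₀]))]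

lemma colorsUsed_le_colorsUsed_merge [Finite V] (hinj : fresh.Injective)
    (hfresh : ∀ e, ∀ a ∈ usedColors G ce cv, a < fresh e) (hcA : c ∈ A)
    (hD : ∀ e ∈ D, e ∈ G.edgeSet ∧ ce e ∈ A) (hc : ∃ e ∈ G.edgeSet, e ∉ D ∧ ce e = c)
    (hcard : A.card ≤ D.card + 1) :
    colorsUsed G ce cv ≤ colorsUsed G (mergeEdges ce A c D fresh) (mergeVerts cv A c) := by
  obtain ⟨e₀, he₀, he₀D, he₀c⟩ := hc
  have hcU : c ∈ usedColors G ce cv := Or.inl ⟨e₀, he₀, he₀c⟩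
  set K := insert c (usedColors G ce cv \ A)
  have hKU : K ⊆ usedColors G ce cv := Set.insert_subset hcU Set.sdiff_subset
  have hdisj : Disjoint K (fresh '' D) := by
    refine Set.disjoint_left.2 fun a ha ⟨e, _, hea⟩ => ?_
    exact (hea ▸ hfresh e a (hKU ha)).false
  have hsub : K ∪ fresh '' D ⊆ usedColors G (mergeEdges ce A c D fresh) (mergeVerts cv A c) := by
    rintro a ((rfl | ⟨⟨g, hg, rfl⟩ | ⟨v, rfl⟩, haA⟩) | ⟨e, he, rfl⟩)
    · exact Or.inl ⟨e₀, he₀, by simp [mergeEdges, he₀D, he₀c, hcA]⟩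
    · exact Or.inl ⟨g, hg, mergeEdges_of_notMem (fun hgD => haA (hD g hgD).2) haA⟩
    · exact Or.inr ⟨v, mergeVerts_of_notMem haA⟩
    · exact Or.inl ⟨e, (hD e he).1, by simp [mergeEdges, Finset.mem_coe.1 he]⟩
  calc colorsUsed G ce cv ≤ (usedColors G ce cv \ A).ncard + A.card := by
        rw [colorsUsed_eq_ncard, ← Set.ncard_coe_finset]
        exact Set.ncard_le_ncard_sdiff_add_ncard _ _
    _ ≤ (K ∪ fresh '' D).ncard := by
        rw [Set.ncard_union_eq hdisj (usedColors_finite.subset hKU),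
          Set.ncard_image_of_injective _ hinj, Set.ncard_coe_finset,
          Set.ncard_insert_of_notMem (fun h => h.2 hcA) usedColors_finite.sdiff]
        omega
    _ ≤ _ := Set.ncard_le_ncard hsub usedColors_finite

lemma nontrivialColors_merge_subset [Finite V] (hinj : fresh.Injective)
    (hfresh : ∀ e, ∀ f ∈ G.edgeSet, ce f < fresh e) :
    nontrivialColors G (mergeEdges ce A c D fresh) ⊆ nontrivialColors G ce \ A ∪ {c} := by
  intro a ha
  by_cases hac : a = c
  · exact Or.inr hac
  obtain ⟨e₁, he₁, he₁a⟩ := colorClass_nonempty ha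
  rcases mergeEdges_eq_of_ne he₁a hac with ⟨he₁D, rfl⟩ | ⟨-, he₁A, rfl⟩
  · have hsub : colorClass G (mergeEdges ce A c D fresh) (fresh e₁) ⊆ {e₁} := by
      rintro e ⟨he, hea⟩
      rcases mergeEdges_eq_of_ne hea hac with ⟨-, hfe⟩ | ⟨-, -, hce⟩
      · exact hinj hfe
      · exact absurd hce (hfresh e₁ e he).ne
    have := Set.ncard_le_ncard hsub (Set.finite_singleton e₁)
    simp only [nontrivialColors, Set.mem_ofPred_eq, Set.ncard_singleton] at ha this
    omega
  · refine Or.inl ⟨le_trans ha (Set.ncard_le_ncard ?_ (Set.toFinite _)), he₁A⟩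
    rintro e ⟨he, hea⟩
    rcases mergeEdges_eq_of_ne hea hac with ⟨-, hfe⟩ | ⟨-, -, hce⟩
    · exact absurd hfe (hfresh e e₁ he₁).ne'
    · exact ⟨he, hce⟩

variable {k : ℕ} {x y : V} {w : G.Walk x y}

lemma WalkIn.merge (hw : WalkIn (ce · = k) (cv · = k) w) (hk : k ∈ A)
    (hD : ∀ e ∈ w.edges, e ∉ D) :
    WalkIn (fun f => ce f ∈ A ∧ f ∉ D) (fun z => cv z ∈ A) w :=
  ⟨fun e he => ⟨hw.1 e he ▸ hk, hD e he⟩,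
    fun z hz => (hw.2 z hz).imp_right <|
      Or.imp_right fun (h : cv z = k) => show cv z ∈ A from h ▸ hk⟩

lemma WalkIn.merge_of_ne (hw : WalkIn (ce · = k) (cv · = k) w) (hk : k ∈ A)
    (hD : ↑D ⊆ colorClass G ce d) (hkd : k ≠ d) :
    WalkIn (fun f => ce f ∈ A ∧ f ∉ D) (fun z => cv z ∈ A) w :=
  hw.merge hk fun e he heD => hkd ((hw.1 e he).symm.trans (hD heD).2)

end Merge

section MergeExtremal

variable [Fintype V]

theorem IsExtremal.exists_merge (h : IsExtremal G ce cv) {A : Finset ℕ} (hcA : c ∈ A)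
    {D : Finset (Sym2 V)} (hD : ∀ e ∈ D, e ∈ G.edgeSet ∧ ce e ∈ A)
    (hc : ∃ e ∈ G.edgeSet, e ∉ D ∧ ce e = c) (hcard : A.card ≤ D.card + 1)
    (detour : ∀ e ∈ D, ∃ a b, e = s(a, b) ∧
      ∃ w : G.Walk a b, WalkIn (fun f => ce f ∈ A ∧ f ∉ D) (fun z => cv z ∈ A) w) :
    ∃ ce' cv', IsExtremal G ce' cv' ∧ nontrivialColors G ce' ⊆ nontrivialColors G ce \ A ∪ {c} := by
  obtain ⟨N, hN⟩ := (usedColors_finite (G := G) (ce := ce) (cv := cv)).bddAbove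
  obtain ⟨ι, hι⟩ := exists_injective_nat (Sym2 V)
  have hfresh : ∀ e, ∀ a ∈ usedColors G ce cv, a < N + 1 + ι e :=
    fun e a ha => by have := hN ha; omega
  refine ⟨_, _, h.of_colorsUsed_le (isTMCColoring_merge h.1 c _ (fun e he => (hD e he).2) detour)
    (colorsUsed_le_colorsUsed_merge (fun e f hef => hι (by omega)) hfresh hcA hD hc hcard),
    nontrivialColors_merge_subset (fun e f hef => hι (by omega))
      fun e f hf => hfresh e _ (Or.inl ⟨f, hf, rfl⟩)⟩

end MergeExtremal

section Minimal

variable [Fintype V]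

def IsMinimalExtremal (G : SimpleGraph V) (ce : Sym2 V → ℕ) (cv : V → ℕ) : Prop :=
  IsExtremal G ce cv ∧ ∀ ce' cv', IsExtremal G ce' cv' →
    (nontrivialColors G ce).ncard ≤ (nontrivialColors G ce').ncard

lemma exists_isMinimalExtremal (hG : G.Connected) : ∃ ce cv, IsMinimalExtremal G ce cv := by
  obtain ⟨ce₀, cv₀, h₀⟩ := exists_isExtremal hG
  obtain ⟨⟨ce, cv⟩, h, hmin⟩ :=
    (measure fun p : (Sym2 V → ℕ) × (V → ℕ) => (nontrivialColors G p.1).ncard).wf.has_min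
      {p | IsExtremal G p.1 p.2} ⟨(ce₀, cv₀), h₀⟩
  exact ⟨ce, cv, h, fun ce' cv' h' => not_lt.1 (hmin (ce', cv') h')⟩

theorem IsMinimalExtremal.false_of_merge (h : IsMinimalExtremal G ce cv)
    (hc : c ∈ nontrivialColors G ce) (hd : d ∈ nontrivialColors G ce) (hcd : c ≠ d)
    {A : Finset ℕ} (hcA : c ∈ A) (hdA : d ∈ A) {D : Finset (Sym2 V)}
    (hD : ↑D ⊆ colorClass G ce d) (hcard : A.card ≤ D.card + 1)
    (detour : ∀ e ∈ D, ∃ a b, e = s(a, b) ∧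
      ∃ w : G.Walk a b, WalkIn (fun f => ce f ∈ A ∧ f ∉ D) (fun z => cv z ∈ A) w) : False := by
  obtain ⟨e, he, hec⟩ := colorClass_nonempty hc
  obtain ⟨ce', cv', h', hsub⟩ := h.1.exists_merge hcA (fun f hf => ⟨(hD hf).1, (hD hf).2 ▸ hdA⟩)
    ⟨e, he, fun heD => hcd (hec.symm.trans (hD heD).2), hec⟩ hcard detour
  have hsub' : nontrivialColors G ce' ⊆ nontrivialColors G ce \ {d} := by
    intro a ha
    rcases hsub ha with ⟨ha, haA⟩ | rfl
    · exact ⟨ha, fun had => haA (by rw [Set.mem_singleton_iff.1 had]; exact hdA)⟩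
    · exact ⟨hc, hcd⟩
  exact (h.2 ce' cv' h').not_gt ((Set.ncard_le_ncard hsub' nontrivialColors_finite.sdiff).trans_lt
    (Set.ncard_sdiff_singleton_lt_of_mem hd nontrivialColors_finite))

section Configurations

variable (h : IsMinimalExtremal G ce cv) (hc : c ∈ nontrivialColors G ce)
  (hd : d ∈ nontrivialColors G ce) (hcd : c ≠ d)
include h hc hd hcd

/-- The first edge `s(v, r)` of a `d`-path from `v` to `u` is bypassed by a `c`-walk from `v`
to `u` followed by the rest of the path backwards; `u` may be passed since it has color `c`. -/
theorem IsMinimalExtremal.false_of_shared_of_color_eq {u v : V} (huv : u ≠ v)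
    (huc : u ∈ colorVerts G ce c) (hud : u ∈ colorVerts G ce d) (hvc : v ∈ colorVerts G ce c)
    (hvd : v ∈ colorVerts G ce d) (hcu : cv u = c) : False := by
  classical
  obtain ⟨w, hw⟩ := h.1.exists_walkIn hvd hud
  have hpath := w.bypass_isPath
  have hwb := hw.bypass
  generalize w.bypass = p at hpath hwb
  cases p with
  | nil => exact huv rfl
  | @cons _ r _ hvr rest =>
    have hv : v ∉ rest.support := ((Walk.cons_isPath_iff _ _).1 hpath).2
    have he₀ : ↑({s(v, r)} : Finset (Sym2 V)) ⊆ colorClass G ce d := by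
      simpa using ⟨hvr, hwb.1 _ (by simp)⟩
    obtain ⟨wc, hwc⟩ := h.1.exists_walkIn hvc huc
    refine h.false_of_merge hc hd hcd (A := {c, d}) (by simp) (by simp) he₀
      (by simpa using Finset.card_le_two) ?_
    have hrest : ∀ e ∈ rest.reverse.edges, e ∉ ({s(v, r)} : Finset (Sym2 V)) := by
      intro e he he'
      rw [Finset.mem_singleton.1 he'] at he
      exact hv (rest.fst_mem_support_of_mem_edges (by simpa using he))
    intro e he
    rw [Finset.mem_singleton.1 he]
    exact ⟨v, r, rfl, wc.append rest.reverse, (hwc.merge_of_ne (by simp) he₀ hcd).append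
      ((hwb.of_cons hv).reverse.merge (by simp) hrest) (by simp [hcu])⟩

theorem IsMinimalExtremal.false_of_shared_edge {u v : V} (huc : u ∈ colorVerts G ce c)
    (hvc : v ∈ colorVerts G ce c) (huvd : s(u, v) ∈ colorClass G ce d) : False := by
  classical
  obtain ⟨wc, hwc⟩ := h.1.exists_walkIn huc hvc
  have he₀ : ↑({s(u, v)} : Finset (Sym2 V)) ⊆ colorClass G ce d := by simpa using huvd
  refine h.false_of_merge hc hd hcd (A := {c, d}) (by simp) (by simp) he₀
    (by simpa using Finset.card_le_two) ?_
  intro e he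
  rw [Finset.mem_singleton.1 he]
  exact ⟨u, v, rfl, wc, hwc.merge_of_ne (A := {c, d}) (by simp) he₀ hcd⟩

/-- Let `p` be a vertex of color `c` on `T_c` and `q` one of color `d` on `T_d`, joined by a
path of a third color `y`. Every `d`-edge `s(x, r)` at `x ∈ {u, v}` is bypassed by going from `x`
to `p` in `T_c`, to `q` along the `y`-path and to `r` in `T_d`; so `c`, `d`, `y` merge while the
two `d`-edges at `u` and `v` receive fresh colors. -/
theorem IsMinimalExtremal.false_of_shared_of_color_ne {u v p q : V} (huv : u ≠ v)
    (huc : u ∈ colorVerts G ce c) (hud : u ∈ colorVerts G ce d) (hvc : v ∈ colorVerts G ce c)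
    (hvd : v ∈ colorVerts G ce d) (hdu : cv u ≠ d) (hdv : cv v ≠ d)
    (huvd : s(u, v) ∉ colorClass G ce d) (hpc : p ∈ colorVerts G ce c) (hcp : cv p = c)
    (hpd : p ∉ colorVerts G ce d) (hqd : q ∈ colorVerts G ce d) (hdq : cv q = d)
    (hqc : q ∉ colorVerts G ce c) : False := by
  classical
  have hpq : p ≠ q := fun hpq => hcd (hcp.symm.trans (hpq ▸ hdq))
  obtain ⟨y, wy, hwy⟩ := isTMCColoring_iff.1 h.1.1 p q hpq
  obtain ⟨hpy, hqy⟩ := mem_colorVerts_of_walk hpq hwy.1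
  have hyc : y ≠ c := fun hyc => hqc (hyc ▸ hqy)
  have hyd : y ≠ d := fun hyd => hpd (hyd ▸ hpy)
  obtain ⟨eu, heu, hdeu, hueu⟩ := hud
  obtain ⟨ev, hev, hdev, hvev⟩ := hvd
  obtain ⟨ru, rfl⟩ : ∃ ru, s(u, ru) = eu := ⟨_, Sym2.other_spec hueu⟩
  obtain ⟨rv, rfl⟩ : ∃ rv, s(v, rv) = ev := ⟨_, Sym2.other_spec hvev⟩
  have huvd' : s(v, u) ∉ colorClass G ce d := by rwa [Sym2.eq_swap]
  set D : Finset (Sym2 V) := {s(u, ru), s(v, rv)}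
  set A : Finset ℕ := {c, d, y}
  have hD : ↑D ⊆ colorClass G ce d := by
    simp [D, Set.insert_subset_iff, colorClass, heu, hdeu, hev, hdev]
  have bypass : ∀ x ∈ colorVerts G ce c, ∀ r ∈ colorVerts G ce d, r ≠ u → r ≠ v →
      ∃ w : G.Walk x r, WalkIn (fun f => ce f ∈ A ∧ f ∉ D) (fun z => cv z ∈ A) w := by
    intro x hx r hr hru hrv
    obtain ⟨wc, hwc⟩ := h.1.exists_walkIn hx hpc
    obtain ⟨wd, hwd⟩ := h.1.exists_walkIn hqd hr
    have hwdD : ∀ e ∈ wd.edges, e ∉ D := by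
      intro e he heD
      rcases (by simpa [D] using heD : e = s(u, ru) ∨ e = s(v, rv)) with rfl | rfl
      · exact hwd.notMem_edges (by rintro rfl; exact hdu hdq) hru.symm hdu (Sym2.mem_mk_left _ _) he
      · exact hwd.notMem_edges (by rintro rfl; exact hdv hdq) hrv.symm hdv (Sym2.mem_mk_left _ _) he
    exact ⟨(wc.append wy).append wd,
      ((hwc.merge_of_ne (by simp [A]) hD hcd).append (hwy.merge_of_ne (by simp [A]) hD hyd)
        (by simp [A, hcp])).append (hwd.merge (by simp [A]) hwdD) (by simp [A, hdq])⟩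
  have hru : ru ≠ u := (G.mem_edgeSet.1 heu).ne.symm
  have hrv : rv ≠ v := (G.mem_edgeSet.1 hev).ne.symm
  have hne : s(u, ru) ≠ s(v, rv) := fun h => huvd (by
    rcases Sym2.eq_iff.1 h with ⟨h, -⟩ | ⟨-, rfl⟩
    exacts [absurd h huv, ⟨heu, hdeu⟩])
  refine h.false_of_merge hc hd hcd (A := A) (by simp [A]) (by simp [A]) hD
    (by simpa [D, Finset.card_pair hne] using Finset.card_le_three) fun e he => ?_
  rcases (by simpa [D] using he : e = s(u, ru) ∨ e = s(v, rv)) with rfl | rfl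
  · refine ⟨u, ru, rfl, bypass u huc ru ⟨_, heu, hdeu, Sym2.mem_mk_right _ _⟩ hru ?_⟩
    rintro rfl
    exact huvd ⟨heu, hdeu⟩
  · refine ⟨v, rv, rfl, bypass v hvc rv ⟨_, hev, hdev, Sym2.mem_mk_right _ _⟩ ?_ hrv⟩
    rintro rfl
    exact huvd' ⟨hev, hdev⟩

theorem IsMinimalExtremal.ncard_colorVerts_inter_le_one :
    (colorVerts G ce c ∩ colorVerts G ce d).ncard ≤ 1 := by
  by_contra! hlt
  obtain ⟨u, ⟨huc, hud⟩, v, ⟨hvc, hvd⟩, huv⟩ := (Set.one_lt_ncard (Set.toFinite _)).1 hlt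
  by_cases hcu : cv u = c
  · exact h.false_of_shared_of_color_eq hc hd hcd huv huc hud hvc hvd hcu
  by_cases hdu : cv u = d
  · exact h.false_of_shared_of_color_eq hd hc hcd.symm huv hud huc hvd hvc hdu
  by_cases hcv : cv v = c
  · exact h.false_of_shared_of_color_eq hc hd hcd huv.symm hvc hvd huc hud hcv
  by_cases hdv : cv v = d
  · exact h.false_of_shared_of_color_eq hd hc hcd.symm huv.symm hvd hvc hud huc hdv
  by_cases huvd : s(u, v) ∈ colorClass G ce d
  · exact h.false_of_shared_edge hc hd hcd huc hvc huvd
  obtain ⟨p, hpc, hcp⟩ := h.1.exists_mem_colorVerts_color_eq hc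
  obtain ⟨q, hqd, hdq⟩ := h.1.exists_mem_colorVerts_color_eq hd
  by_cases hpd : p ∈ colorVerts G ce d
  · exact h.false_of_shared_of_color_eq hc hd hcd (by rintro rfl; exact hcu hcp) hpc hpd huc hud hcp
  by_cases hqc : q ∈ colorVerts G ce c
  · exact h.false_of_shared_of_color_eq hd hc hcd.symm (by rintro rfl; exact hdu hdq) hqd hqc hud
      huc hdq
  exact h.false_of_shared_of_color_ne hc hd hcd huv huc hud hvc hvd hdu hdv huvd hpc hcp hpd hqd hdq
    hqc

end Configurations

end Minimal

end TMC

theorem stmt10 {V : Type*} [Fintype V] (G : SimpleGraph V) (hG : G.Connected) :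
    ∃ (ce : Sym2 V → ℕ) (cv : V → ℕ), IsTMCColoring G ce cv ∧
      colorsUsed G ce cv = tmc G ∧
      ∀ c d : ℕ, c ≠ d →
        2 ≤ {e ∈ G.edgeSet | ce e = c}.ncard →
        2 ≤ {e ∈ G.edgeSet | ce e = d}.ncard →
        ({v : V | ∃ e ∈ G.edgeSet, ce e = c ∧ v ∈ e} ∩
          {v : V | ∃ e ∈ G.edgeSet, ce e = d ∧ v ∈ e}).ncard ≤ 1 := by
  obtain ⟨ce, cv, h⟩ := TMC.exists_isMinimalExtremal hG
  exact ⟨ce, cv, h.1.1, h.1.2, fun c d hcd hc hd => h.ncard_colorVerts_inter_le_one hc hd hcd⟩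
end

section
/- Let n and p be integers with n/2 < p < n − 2, let t = 2(p+1) − n, and let G = Gₙᵗ be the graph obtained from the complete graph K_n as follows: partition the vertex set into n − p classes V₁,…,V_{n−p} with |V₁| = … = |V_{n−p−1}| = 2 and |V_{n−p}| = t; for each class V_j select a vertex v_j* and delete all edges joining v_j* to the other vertices of V_j. Then tmc(G) = m, where m is the number of edges of G. -/
open SimpleGraph

/-!
Upper bound: if `x` has a non-neighbour `y`, a total monochromatic `x`–`y` path starts with an
edge `s(x, a)` coloured like the vertex `a`. Fixing such an edge `s(x, A x)` for every `x`, the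
colour of `x` is determined by the edge `s(x, A x)`, whose own colour is a vertex colour. Hence the
vertex colours inject into the edges carrying a vertex colour, while the remaining colours are
colours of the remaining edges, and there are at most `|E(G)|` colours in all.

Lower bound: the colours are edges of `G`. Arrange the classes cyclically; every vertex `x` is
adjacent to the star `v*` of the next class. All these next-star edges leaving class `j`, and the
star of class `j + 1`, get the colour `s(v*_j, v*_{j+1})`; a non-star vertex `x` gets the colour of
its next-star edge, and every other edge is its own colour. Two non-adjacent vertices lie in one
class `j` and are joined by a monochromatic path through the star of class `j + 1`, and every
edge of `G` occurs as a colour.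
-/

open Function

section UpperBound

variable {V : Type*} {G : SimpleGraph V} {ce : Sym2 V → ℕ} {cv : V → ℕ}

lemma IsTotalMonoWalk.exists_adj_color_eq {x y : V} {w : G.Walk x y}
    (hw : IsTotalMonoWalk ce cv w) (hne : x ≠ y) (hxy : ¬ G.Adj x y) :
    ∃ a, G.Adj x a ∧ ce s(x, a) = cv a := by
  obtain ⟨c, hce, hcv⟩ := hw
  match w, hne, hxy with
  | .nil, hne, _ => exact absurd rfl hne
  | .cons h .nil, _, hxy => exact absurd h hxy
  | .cons (v := a) h (.cons h' w), _, _ =>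
    refine ⟨a, h, ?_⟩
    rw [hce _ (by simp), hcv _ (by simp [List.dropLast_cons_of_ne_nil w.support_ne_nil])]

lemma colorsUsed_le_of_forall_adj_color_eq [Finite V] (A : V → V) (hA : ∀ v, G.Adj v (A v))
    (hAc : ∀ v, ce s(v, A v) = cv (A v)) : colorsUsed G ce cv ≤ G.edgeSet.ncard := by
  set φ : V → Sym2 V := fun v => s(v, A v)
  set E := G.edgeSet
  have hfac : FactorsThrough cv φ := by
    intro v w h
    rcases Sym2.eq_iff.mp h with ⟨rfl, -⟩ | ⟨hv, hw⟩
    · rfl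
    · calc cv v = ce s(w, A w) := by rw [hv, hAc]
        _ = ce s(v, A v) := congrArg ce h.symm
        _ = cv w := by rw [hAc, hw]
  have hvert : Set.range cv ⊆ extend φ cv 0 '' (E ∩ ce ⁻¹' Set.range cv) := by
    rintro _ ⟨v, rfl⟩
    exact ⟨φ v, ⟨hA v, A v, (hAc v).symm⟩, hfac.extend_apply _ v⟩
  calc colorsUsed G ce cv = (Set.range cv ∪ ce '' (E \ ce ⁻¹' Set.range cv)).ncard := by
        rw [colorsUsed, Set.image_sdiff_preimage, Set.union_sdiff_self, Set.union_comm]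
    _ ≤ (Set.range cv).ncard + (ce '' (E \ ce ⁻¹' Set.range cv)).ncard := Set.ncard_union_le _ _
    _ ≤ (E ∩ ce ⁻¹' Set.range cv).ncard + (E \ ce ⁻¹' Set.range cv).ncard :=
        add_le_add ((Set.ncard_le_ncard hvert).trans Set.ncard_image_le) Set.ncard_image_le
    _ = E.ncard := Set.ncard_inter_add_ncard_sdiff_eq_ncard _ _

lemma IsTMCColoring.colorsUsed_le [Finite V] (h : IsTMCColoring G ce cv)
    (hnon : ∀ v, ∃ u, v ≠ u ∧ ¬ G.Adj v u) : colorsUsed G ce cv ≤ G.edgeSet.ncard := by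
  have hA : ∀ v, ∃ a, G.Adj v a ∧ ce s(v, a) = cv a := fun v => by
    obtain ⟨u, hne, hvu⟩ := hnon v
    obtain ⟨w, -, hw⟩ := h v u hne
    exact hw.exists_adj_color_eq hne hvu
  choose A hAadj hAc using hA
  exact colorsUsed_le_of_forall_adj_color_eq A hAadj hAc

end UpperBound

lemma colorsUsed_comp_of_injective {V α : Type*} (G : SimpleGraph V) {ι : α → ℕ}
    (hι : Injective ι) (κ : Sym2 V → α) (χ : V → α) :
    colorsUsed G (ι ∘ κ) (ι ∘ χ) = (κ '' G.edgeSet ∪ Set.range χ).ncard := by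
  rw [colorsUsed, Set.image_comp, Set.range_comp, ← Set.image_union,
    Set.ncard_image_of_injective _ hι]

lemma isTotalMonoWalk_toWalk {V : Type*} {G : SimpleGraph V} (ce : Sym2 V → ℕ) (cv : V → ℕ)
    {u v : V} (h : G.Adj u v) : IsTotalMonoWalk ce cv h.toWalk :=
  ⟨ce s(u, v), by simp, by simp⟩

lemma isTotalMonoWalk_cons_toWalk {V : Type*} {G : SimpleGraph V} {ce : Sym2 V → ℕ}
    {cv : V → ℕ} {u w v : V} (huw : G.Adj u w) (hwv : G.Adj w v)
    (h₁ : ce s(u, w) = cv w) (h₂ : ce s(v, w) = cv w) :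
    IsTotalMonoWalk ce cv (.cons huw hwv.toWalk) :=
  ⟨cv w, by simp [h₁, Sym2.eq_swap (a := w), h₂], by simp⟩

lemma Fin.add_one_ne_self {r : ℕ} [NeZero r] (hr : 2 ≤ r) (j : Fin r) : j + 1 ≠ j := by
  simp [Fin.ext_iff]; omega

lemma Fin.add_one_add_one_ne_self {r : ℕ} [NeZero r] (hr : 3 ≤ r) (j : Fin r) :
    j + 1 + 1 ≠ j := by
  rw [add_assoc, Ne, add_eq_left, Fin.ext_iff, Fin.val_add, Fin.val_one']
  simp [Nat.mod_eq_of_lt (show 2 < r by omega)]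

section NextStarColoring

variable {V : Type*} {r : ℕ} [NeZero r] (cl : V → Fin r) (vstar : Fin r → V)

def nextStarEdge (x : V) : Sym2 V := s(x, vstar (cl x + 1))

noncomputable def nextStarEdgeColor : Sym2 V → Sym2 V :=
  extend (nextStarEdge cl vstar) (fun x => nextStarEdge cl vstar (vstar (cl x))) id

open scoped Classical in
noncomputable def nextStarVertexColor (v : V) : Sym2 V :=
  nextStarEdge cl vstar (if v = vstar (cl v) then vstar (cl v - 1) else v)

variable {cl vstar}

lemma nextStarEdge_injective (hvstar : ∀ j, cl (vstar j) = j) (hr : 3 ≤ r) :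
    Injective (nextStarEdge cl vstar) := by
  intro x y h
  rcases Sym2.eq_iff.mp h with ⟨hxy, -⟩ | ⟨hx, hy⟩
  · exact hxy
  -- With only two classes, `s(vstar 0, vstar 1)` would be the next-star edge of both stars.
  · have hxy : cl x = cl y + 1 := by rw [hx, hvstar]
    have hyx : cl y = cl x + 1 := by rw [← hy, hvstar]
    exact absurd (hxy ▸ hyx).symm (Fin.add_one_add_one_ne_self hr _)

lemma nextStarEdgeColor_nextStarEdge (hvstar : ∀ j, cl (vstar j) = j) (hr : 3 ≤ r) (x : V) :
    nextStarEdgeColor cl vstar (nextStarEdge cl vstar x) = nextStarEdge cl vstar (vstar (cl x)) :=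
  (nextStarEdge_injective hvstar hr).extend_apply _ _ x

lemma nextStarVertexColor_vstar (hvstar : ∀ j, cl (vstar j) = j) (j : Fin r) :
    nextStarVertexColor cl vstar (vstar j) = nextStarEdge cl vstar (vstar (j - 1)) := by
  simp [nextStarVertexColor, hvstar]

lemma mem_range_nextStarVertexColor_or_nextStarEdgeColor_eq (hvstar : ∀ j, cl (vstar j) = j)
    (hr : 3 ≤ r) (e : Sym2 V) :
    e ∈ Set.range (nextStarVertexColor cl vstar) ∨ nextStarEdgeColor cl vstar e = e := by
  by_cases he : ∃ x, nextStarEdge cl vstar x = e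
  · obtain ⟨x, rfl⟩ := he
    by_cases hx : x = vstar (cl x)
    · right
      rw [nextStarEdgeColor_nextStarEdge hvstar hr, ← hx]
    · exact Or.inl ⟨x, by simp [nextStarVertexColor, hx]⟩
  · exact Or.inr (extend_apply' _ _ _ he)

lemma isTMCColoring_nextStarColoring (hvstar : ∀ j, cl (vstar j) = j) (hr : 3 ≤ r)
    {G : SimpleGraph V} (hadj : ∀ x, G.Adj x (vstar (cl x + 1)))
    (hsame : ∀ u v, ¬ G.Adj u v → cl u = cl v) (ι : Sym2 V → ℕ) :
    IsTMCColoring G (ι ∘ nextStarEdgeColor cl vstar) (ι ∘ nextStarVertexColor cl vstar) := by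
  intro u v huv
  by_cases h : G.Adj u v
  · exact ⟨h.toWalk, h.isPath_toWalk, isTotalMonoWalk_toWalk _ _ h⟩
  have hcl := hsame u v h
  have hu := hadj u
  have hv : G.Adj (vstar (cl u + 1)) v := hcl ▸ (hadj v).symm
  have hcolor : ∀ x, cl x = cl u → (ι ∘ nextStarEdgeColor cl vstar) (nextStarEdge cl vstar x) =
      (ι ∘ nextStarVertexColor cl vstar) (vstar (cl u + 1)) := by
    intro x hx
    simp only [comp_apply, nextStarEdgeColor_nextStarEdge hvstar hr,
      nextStarVertexColor_vstar hvstar, add_sub_cancel_right, hx]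
  refine ⟨.cons hu hv.toWalk, ?_,
    isTotalMonoWalk_cons_toWalk hu hv (hcolor u rfl) (hcl ▸ hcolor v hcl.symm)⟩
  simp [Walk.cons_isPath_iff, hv.isPath_toWalk, hu.ne, huv]

lemma ncard_edgeSet_le_colorsUsed_nextStarColoring [Fintype V] (hvstar : ∀ j, cl (vstar j) = j)
    (hr : 3 ≤ r) (G : SimpleGraph V) {ι : Sym2 V → ℕ} (hι : Injective ι) :
    G.edgeSet.ncard ≤
      colorsUsed G (ι ∘ nextStarEdgeColor cl vstar) (ι ∘ nextStarVertexColor cl vstar) := by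
  rw [colorsUsed_comp_of_injective G hι]
  refine Set.ncard_le_ncard (fun e he => ?_) (Set.toFinite _)
  rcases mem_range_nextStarVertexColor_or_nextStarEdgeColor_eq hvstar hr e with h | h
  · exact Or.inr h
  · exact Or.inl ⟨e, he, h⟩

end NextStarColoring

lemma tmc_eq_of_forall_le_of_exists {V : Type*} [Fintype V] {G : SimpleGraph V} {k : ℕ}
    (hle : ∀ ce cv, IsTMCColoring G ce cv → colorsUsed G ce cv ≤ k)
    (hex : ∃ ce cv, IsTMCColoring G ce cv ∧ k ≤ colorsUsed G ce cv) : tmc G = k := by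
  obtain ⟨ce, cv, h, hk⟩ := hex
  refine IsGreatest.csSup_eq ⟨⟨ce, cv, h, le_antisymm (hle ce cv h) hk⟩, ?_⟩
  rintro _ ⟨ce, cv, h, rfl⟩
  exact hle ce cv h

section StarDeletedGraph

variable {V : Type*} {r : ℕ} {cl : V → Fin r} {vstar : Fin r → V} {G : SimpleGraph V}

lemma adj_of_cl_ne
    (hG : ∀ u v : V, G.Adj u v ↔
      u ≠ v ∧ ¬(cl u = cl v ∧ (u = vstar (cl u) ∨ v = vstar (cl u))))
    {u v : V} (h : cl u ≠ cl v) : G.Adj u v :=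
  (hG u v).2 ⟨fun huv => h (congrArg cl huv), fun h' => h h'.1⟩

lemma cl_eq_of_not_adj
    (hG : ∀ u v : V, G.Adj u v ↔
      u ≠ v ∧ ¬(cl u = cl v ∧ (u = vstar (cl u) ∨ v = vstar (cl u))))
    (u v : V) (h : ¬ G.Adj u v) : cl u = cl v :=
  not_not.mp fun hne => h (adj_of_cl_ne hG hne)

lemma exists_not_adj
    (hG : ∀ u v : V, G.Adj u v ↔
      u ≠ v ∧ ¬(cl u = cl v ∧ (u = vstar (cl u) ∨ v = vstar (cl u))))
    (hvstar : ∀ j, cl (vstar j) = j) (hclass : ∀ j, 1 < {v | cl v = j}.ncard) (v : V) :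
    ∃ u, v ≠ u ∧ ¬ G.Adj v u := by
  by_cases hv : v = vstar (cl v)
  · obtain ⟨u, hu, huv⟩ := Set.exists_ne_of_one_lt_ncard (hclass (cl v)) v
    exact ⟨u, huv.symm, fun h => ((hG v u).1 h).2 ⟨hu.symm, Or.inl hv⟩⟩
  · exact ⟨vstar (cl v), hv, fun h => ((hG _ _).1 h).2 ⟨(hvstar _).symm, Or.inr rfl⟩⟩

end StarDeletedGraph

theorem stmt12_general {V : Type*} [Fintype V] (n p t : ℕ)
    (hp1 : n < 2 * p) (hp2 : p + 2 < n)
    (ht : t = 2 * (p + 1) - n)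
    (cl : V → Fin (n - p)) (vstar : Fin (n - p) → V)
    (hvstar : ∀ j, cl (vstar j) = j)
    (hsize2 : ∀ j : Fin (n - p), (j : ℕ) < n - p - 1 → {v | cl v = j}.ncard = 2)
    (hsizet : ∀ j : Fin (n - p), (j : ℕ) = n - p - 1 → {v | cl v = j}.ncard = t)
    (G : SimpleGraph V)
    (hG : ∀ u v : V, G.Adj u v ↔
      u ≠ v ∧ ¬(cl u = cl v ∧ (u = vstar (cl u) ∨ v = vstar (cl u)))) :
    tmc G = G.edgeSet.ncard := by
  have hr : 3 ≤ n - p := by omega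
  have : NeZero (n - p) := ⟨by omega⟩
  have hclass (j : Fin (n - p)) : 1 < {v | cl v = j}.ncard := by
    rcases Nat.lt_or_ge j (n - p - 1) with h | h
    · rw [hsize2 j h]; omega
    · rw [hsizet j (by omega)]; omega
  have hadj (x : V) : G.Adj x (vstar (cl x + 1)) :=
    adj_of_cl_ne hG (by rw [hvstar]; exact (Fin.add_one_ne_self (by omega) _).symm)
  obtain ⟨ι, hι⟩ := countable_iff_exists_injective (Sym2 V) |>.mp inferInstance
  exact tmc_eq_of_forall_le_of_exists
    (fun ce cv h => h.colorsUsed_le (exists_not_adj hG hvstar hclass))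
    ⟨_, _, isTMCColoring_nextStarColoring hvstar hr hadj (cl_eq_of_not_adj hG) ι,
      ncard_edgeSet_le_colorsUsed_nextStarColoring hvstar hr G hι⟩

theorem stmt12 {V : Type*} [Fintype V] (n p t : ℕ)
    (hn : Fintype.card V = n) (hp1 : n < 2 * p) (hp2 : p + 2 < n)
    (ht : t = 2 * (p + 1) - n)
    (cl : V → Fin (n - p)) (vstar : Fin (n - p) → V)
    (hvstar : ∀ j, cl (vstar j) = j)
    (hsize2 : ∀ j : Fin (n - p), (j : ℕ) < n - p - 1 → {v | cl v = j}.ncard = 2)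
    (hsizet : ∀ j : Fin (n - p), (j : ℕ) = n - p - 1 → {v | cl v = j}.ncard = t)
    (G : SimpleGraph V)
    (hG : ∀ u v : V, G.Adj u v ↔
      u ≠ v ∧ ¬(cl u = cl v ∧ (u = vstar (cl u) ∨ v = vstar (cl u)))) :
    tmc G = G.edgeSet.ncard :=
  stmt12_general n p t hp1 hp2 ht cl vstar hvstar hsize2 hsizet G hG
end

section
/- Let G be a connected graph with n vertices and m edges. If C(n−t,2) + t(n−t) ≤ m ≤ C(n−t,2) + t(n−t) + (t−2) for some integer t with 2 ≤ t ≤ n − 1, then tmc(G) ≤ m + n − t. -/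
open SimpleGraph

/-!
Fix a TMC-coloring with `k` colors and call a color *common* if it occurs both on an edge and
on a vertex. Counting color classes gives `k + W ≤ m + n`, where `W` sums, over the common
colors `c`, the number of edges plus the number of vertices of color `c`, minus one.
A non-adjacent pair `u, v` is joined by a monochromatic path of length at least two; its color
`c` is common, and its second vertex `x` has color `c` and lies with `u` and `v` in one component
of the subgraph of `c`-colored edges. A component with `e` edges and `y ≥ 1` vertices of color
`c` has at most `e + 1` vertices, so it accounts for at most `C(e + y - 1, 2)` such pairs (when
`y = 1` they avoid the unique `x`). Superadditivity of `C(·, 2)` then bounds the number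
`C(n, 2) - m` of non-edges by `C(W, 2)`, and the upper bound on `m` forces `W ≥ t`.
-/
open Finset

namespace Nat

theorem choose_two_add (a b : ℕ) : (a + b).choose 2 = a.choose 2 + a * b + b.choose 2 := by
  induction b with
  | zero => simp
  | succ b ih =>
    rw [← add_assoc, Nat.choose_succ_succ, ih, Nat.choose_succ_succ b, Nat.choose_one_right,
      Nat.choose_one_right]
    ring

theorem sum_choose_two_le {ι : Type*} (s : Finset ι) (f : ι → ℕ) :
    ∑ i ∈ s, (f i).choose 2 ≤ (∑ i ∈ s, f i).choose 2 := by
  classical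
  induction s using Finset.induction_on with
  | empty => simp
  | insert i s hi ih =>
    rw [sum_insert hi, sum_insert hi, choose_two_add]
    omega

end Nat

theorem Finset.card_le_choose_two_of_forall_mem {α : Type*} [DecidableEq α] (S : Finset (Sym2 α))
    (P : Finset α) (hS : ∀ s ∈ S, ¬ s.IsDiag ∧ ∀ x ∈ s, x ∈ P) :
    #S ≤ (#P).choose 2 := by
  rw [← Sym2.card_image_offDiag]
  refine card_le_card fun s hs => ?_
  induction s with
  | _ a b =>
    obtain ⟨hab, hP⟩ := hS _ hs
    exact mem_image.2 ⟨(a, b), mem_offDiag.2 ⟨hP a (by simp), hP b (by simp), hab⟩, rfl⟩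

theorem Finset.card_le_choose_two_of_avoid {α : Type*} [DecidableEq α] (S : Finset (Sym2 α))
    {P Y : Finset α} (hY : Y.Nonempty) (hYP : Y ⊆ P)
    (hS : ∀ s ∈ S, ¬ s.IsDiag ∧ (∀ x ∈ s, x ∈ P) ∧ ∃ y ∈ Y, y ∉ s) :
    #S ≤ (#P + #Y - 2).choose 2 := by
  obtain ⟨y, rfl⟩ | hY2 := hY.exists_eq_singleton_or_nontrivial
  · have hy : y ∈ P := hYP (mem_singleton_self y)
    calc #S ≤ (#(P.erase y)).choose 2 := by
          refine card_le_choose_two_of_forall_mem S _ fun s hs => ?_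
          obtain ⟨hdiag, hP, z, hz, hzs⟩ := hS s hs
          rw [mem_singleton.1 hz] at hzs
          exact ⟨hdiag, fun x hx => mem_erase.2 ⟨ne_of_mem_of_not_mem hx hzs, hP x hx⟩⟩
      _ = (#P + #{y} - 2).choose 2 := by rw [card_erase_of_mem hy, card_singleton]; rfl
  · calc #S ≤ (#P).choose 2 :=
          card_le_choose_two_of_forall_mem S _ fun s hs => ⟨(hS s hs).1, (hS s hs).2.1⟩
      _ ≤ (#P + #Y - 2).choose 2 := by
          have hY2 := one_lt_card_iff_nontrivial.2 hY2
          exact Nat.choose_le_choose _ (by omega)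

theorem Finset.card_image_add_sum_card_fiber_le {α β : Type*} [DecidableEq β] (s : Finset α)
    (f : α → β) {C : Finset β} (hC : C ⊆ s.image f) :
    #(s.image f) + ∑ c ∈ C, #{a ∈ s | f a = c} ≤ #s + #C := by
  have hfibers : #(s.image f \ C) ≤ ∑ c ∈ s.image f \ C, #{a ∈ s | f a = c} := by
    rw [card_eq_sum_ones]
    refine sum_le_sum fun c hc => ?_
    obtain ⟨a, ha, rfl⟩ := mem_image.1 (mem_sdiff.1 hc).1
    exact card_pos.2 ⟨a, mem_filter.2 ⟨ha, rfl⟩⟩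
  have hsplit := sum_sdiff hC (f := fun c => #{a ∈ s | f a = c})
  rw [← card_eq_sum_card_image] at hsplit
  have hcard := card_sdiff_add_card_eq_card hC
  omega

open Classical

namespace SimpleGraph
variable {V : Type*} [Fintype V] {H : SimpleGraph V}

noncomputable def ConnectedComponent.edgeFinset (K : H.ConnectedComponent) : Finset (Sym2 V) :=
  {e ∈ H.edgeFinset | ∀ x ∈ e, x ∈ K.supp}

theorem ConnectedComponent.ncard_supp_le_card_edgeFinset_add_one (K : H.ConnectedComponent) :
    K.supp.ncard ≤ #K.edgeFinset + 1 := by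
  have hverts := K.connected_toSimpleGraph.card_vert_le_card_edgeSet_add_one
  have hedges : K.toSimpleGraph.edgeSet.ncard ≤ (K.edgeFinset : Set (Sym2 V)).ncard := by
    refine Set.ncard_le_ncard_of_injOn (Sym2.map Subtype.val) ?_
      (Sym2.map.injective Subtype.val_injective).injOn (Finset.finite_toSet _)
    intro e he
    induction e with
    | _ a b =>
      simp only [Sym2.map_mk, coe_filter, mem_edgeFinset, Set.mem_ofPred_eq, mem_edgeSet,
        Sym2.mem_iff, forall_eq_or_imp, forall_eq, ConnectedComponent.edgeFinset]
      exact ⟨he, a.2, b.2⟩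
  rw [Nat.card_coe_set_eq] at hverts
  rw [Set.ncard_coe_finset] at hedges
  exact hverts.trans (by omega)

theorem ConnectedComponent.sum_card_edgeFinset_le (Ks : Finset H.ConnectedComponent) :
    ∑ K ∈ Ks, #K.edgeFinset ≤ #H.edgeFinset := by
  rw [← card_biUnion]
  · exact card_le_card (biUnion_subset.2 fun K _ => filter_subset _ _)
  · intro K _ K' _ hKK'
    refine Finset.disjoint_left.2 fun e he he' => hKK' ?_
    have hx := Sym2.out_fst_mem e
    exact ((mem_filter.1 he).2 _ hx).symm.trans ((mem_filter.1 he').2 _ hx)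

-- For a color class `H` and the vertices `X` of that color, this contains every non-edge whose
-- total monochromatic path has that color.
variable (H) in
noncomputable def servedPairs (X : Finset V) : Finset (Sym2 V) :=
  {s | ¬ s.IsDiag ∧ ∃ x ∈ X, x ∉ s ∧ ∀ y ∈ s, H.Reachable x y}

theorem card_servedPairs_component_le (X : Finset V) (K : H.ConnectedComponent)
    (hK : K ∈ X.image H.connectedComponentMk) :
    #{s ∈ H.servedPairs X | ∀ y ∈ s, y ∈ K.supp} ≤
      (#K.edgeFinset + #{x ∈ X | H.connectedComponentMk x = K} - 1).choose 2 := by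
  set Y := {x ∈ X | H.connectedComponentMk x = K}
  have hY : Y.Nonempty := by
    obtain ⟨x, hx, rfl⟩ := mem_image.1 hK
    exact ⟨x, mem_filter.2 ⟨hx, rfl⟩⟩
  have hYK : Y ⊆ K.supp.toFinset := fun x hx => Set.mem_toFinset.2 (mem_filter.1 hx).2
  have hpairs := card_le_choose_two_of_avoid {s ∈ H.servedPairs X | ∀ y ∈ s, y ∈ K.supp}
    hY hYK fun s hs => by
      obtain ⟨hserved, hsK⟩ := mem_filter.1 hs
      obtain ⟨hdiag, x, hxX, hxs, hreach⟩ := (mem_filter.1 hserved).2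
      have hy := Sym2.out_fst_mem s
      have hxK : H.connectedComponentMk x = K :=
        (ConnectedComponent.sound (hreach _ hy)).trans (hsK _ hy)
      exact ⟨hdiag, fun y hy => Set.mem_toFinset.2 (hsK y hy), x,
        mem_filter.2 ⟨hxX, hxK⟩, hxs⟩
  have hsupp := K.ncard_supp_le_card_edgeFinset_add_one
  rw [Set.ncard_eq_toFinset_card'] at hsupp
  exact hpairs.trans (Nat.choose_le_choose _ (by omega))

theorem card_servedPairs_le {X : Finset V} (hX : X.Nonempty) :
    #(H.servedPairs X) ≤ (#H.edgeFinset + #X - 1).choose 2 := by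
  set Ks := X.image H.connectedComponentMk
  have hcover : H.servedPairs X ⊆
      Ks.biUnion fun K => {s ∈ H.servedPairs X | ∀ y ∈ s, y ∈ K.supp} := by
    intro s hs
    obtain ⟨x, hxX, -, hreach⟩ := (mem_filter.1 hs).2.2
    exact mem_biUnion.2 ⟨_, mem_image_of_mem _ hxX,
      mem_filter.2 ⟨hs, fun y hy => (ConnectedComponent.sound (hreach y hy)).symm⟩⟩
  have hsum : ∑ K ∈ Ks, (#K.edgeFinset + #{x ∈ X | H.connectedComponentMk x = K} - 1) ≤
      #H.edgeFinset + #X - 1 := by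
    have hpos : ∀ K ∈ Ks, 1 ≤ #K.edgeFinset + #{x ∈ X | H.connectedComponentMk x = K} := by
      intro K hK
      obtain ⟨x, hx, rfl⟩ := mem_image.1 hK
      exact le_add_left (card_pos.2 ⟨x, mem_filter.2 ⟨hx, rfl⟩⟩)
    rw [sum_tsub_distrib _ hpos, sum_add_distrib, ← card_eq_sum_card_image, sum_const,
      smul_eq_mul, mul_one]
    have hedges := ConnectedComponent.sum_card_edgeFinset_le Ks
    have hKs : 1 ≤ #Ks := card_pos.2 (hX.image _)
    omega
  calc #(H.servedPairs X)
      ≤ ∑ K ∈ Ks, #{s ∈ H.servedPairs X | ∀ y ∈ s, y ∈ K.supp} :=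
        (card_le_card hcover).trans card_biUnion_le
    _ ≤ ∑ K ∈ Ks, (#K.edgeFinset + #{x ∈ X | H.connectedComponentMk x = K} - 1).choose 2 :=
        sum_le_sum fun K hK => card_servedPairs_component_le X K hK
    _ ≤ (∑ K ∈ Ks,
          (#K.edgeFinset + #{x ∈ X | H.connectedComponentMk x = K} - 1)).choose 2 :=
        Nat.sum_choose_two_le _ _
    _ ≤ (#H.edgeFinset + #X - 1).choose 2 := Nat.choose_le_choose _ hsum

end SimpleGraph

section Coloring

variable {V : Type*} {G : SimpleGraph V} {ce : Sym2 V → ℕ} {cv : V → ℕ}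

variable (G ce) in
def colorClass (c : ℕ) : SimpleGraph V := G.deleteEdges {e | ce e ≠ c}

theorem edgeFinset_colorClass [Fintype V] (c : ℕ) :
    (colorClass G ce c).edgeFinset = {e ∈ G.edgeFinset | ce e = c} := by
  ext e
  rw [mem_filter, SimpleGraph.mem_edgeFinset, SimpleGraph.mem_edgeFinset]
  simp [colorClass, edgeSet_deleteEdges]

variable (G ce cv) in
noncomputable def commonColors [Fintype V] : Finset ℕ := G.edgeFinset.image ce ∩ univ.image cv

theorem colorsUsed_eq_card [Fintype V] :
    colorsUsed G ce cv = #(G.edgeFinset.image ce ∪ univ.image cv) := by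
  rw [colorsUsed, ← Set.ncard_coe_finset, coe_union, coe_image, coe_image, coe_edgeFinset,
    coe_univ, Set.image_univ]

theorem colorsUsed_add_sum_le [Fintype V] :
    colorsUsed G ce cv + ∑ c ∈ commonColors G ce cv,
      (#(colorClass G ce c).edgeFinset + #{x | cv x = c} - 1) ≤
      #G.edgeFinset + Fintype.card V := by
  set C := commonColors G ce cv
  have hsplit : ∑ c ∈ C, (#(colorClass G ce c).edgeFinset + #{x | cv x = c} - 1) + #C =
      ∑ c ∈ C, #{e ∈ G.edgeFinset | ce e = c} + ∑ c ∈ C, #{x | cv x = c} := by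
    rw [card_eq_sum_ones, ← sum_add_distrib, ← sum_add_distrib]
    refine sum_congr rfl fun c hc => ?_
    obtain ⟨x, -, rfl⟩ := mem_image.1 (mem_inter.1 hc).2
    have hx : 0 < #{y | cv y = cv x} := card_pos.2 ⟨x, mem_filter.2 ⟨mem_univ x, rfl⟩⟩
    rw [edgeFinset_colorClass]
    omega
  have hedges := card_image_add_sum_card_fiber_le G.edgeFinset ce (C := C) inter_subset_left
  have hverts := card_image_add_sum_card_fiber_le univ cv (C := C) inter_subset_right
  have hunion : #(G.edgeFinset.image ce ∪ univ.image cv) + #C =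
      #(G.edgeFinset.image ce) + #(univ.image cv) := card_union_add_card_inter _ _
  rw [card_univ] at hverts
  rw [colorsUsed_eq_card]
  omega

theorem IsTMCColoring.exists_hub (h : IsTMCColoring G ce cv) {u v : V} (huv : u ≠ v)
    (hadj : ¬ G.Adj u v) :
    ∃ x, x ≠ u ∧ x ≠ v ∧ (colorClass G ce (cv x)).Adj u x ∧
      (colorClass G ce (cv x)).Reachable x v := by
  obtain ⟨w, hw, c, hce, hcv⟩ := h u v huv
  match w, hw, hce, hcv with
  | .nil, _, _, _ => exact absurd rfl huv
  | .cons hux .nil, _, _, _ => exact absurd hux hadj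
  | .cons (v := x) hux (.cons hxy w'), hw, hce, hcv =>
    have hxc : cv x = c := hcv x (by simp [List.dropLast_cons_of_ne_nil w'.support_ne_nil])
    have hux' := hce s(u, x) (by simp)
    rw [Walk.cons_isPath_iff, Walk.cons_isPath_iff] at hw
    refine ⟨x, fun h => hw.2 (h ▸ Walk.start_mem_support _),
      fun h => hw.1.2 (h ▸ w'.end_mem_support),
      (deleteEdges_adj ..).2 ⟨hux, by simp [hux', hxc]⟩,
      ⟨(Walk.cons hxy w').toDeleteEdges _ fun e he => ?_⟩⟩
    simp [hxc, hce e (by simp_all)]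

theorem IsTMCColoring.nonedges_subset [Fintype V] (h : IsTMCColoring G ce cv) :
    (⊤ : SimpleGraph V).edgeFinset \ G.edgeFinset ⊆
      (commonColors G ce cv).biUnion fun c => (colorClass G ce c).servedPairs {x | cv x = c} := by
  intro s hs
  induction s with
  | _ u v =>
    rw [mem_sdiff, SimpleGraph.mem_edgeFinset, SimpleGraph.mem_edgeFinset, mem_edgeSet,
      mem_edgeSet, top_adj] at hs
    obtain ⟨x, hxu, hxv, hadj, hreach⟩ := h.exists_hub hs.1 hs.2
    have hux := (deleteEdges_adj ..).1 hadj
    refine mem_biUnion.2 ⟨cv x,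
      mem_inter.2 ⟨mem_image.2 ⟨s(u, x), ?_, ?_⟩, mem_image_of_mem _ (mem_univ x)⟩, ?_⟩
    · exact SimpleGraph.mem_edgeFinset.2 hux.1
    · simpa using hux.2
    · refine mem_filter.2 ⟨mem_univ _, by simpa using hs.1, x, by simp, by simp [hxu, hxv], ?_⟩
      simp only [Sym2.mem_iff, forall_eq_or_imp, forall_eq]
      exact ⟨hadj.symm.reachable, hreach⟩

theorem IsTMCColoring.choose_two_sub_le [Fintype V] (h : IsTMCColoring G ce cv) :
    (Fintype.card V).choose 2 - #G.edgeFinset ≤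
      (#G.edgeFinset + Fintype.card V - colorsUsed G ce cv).choose 2 := by
  have hcolors := colorsUsed_add_sum_le (G := G) (ce := ce) (cv := cv)
  calc (Fintype.card V).choose 2 - #G.edgeFinset
      = #((⊤ : SimpleGraph V).edgeFinset \ G.edgeFinset) := by
        rw [card_sdiff_of_subset (edgeFinset_subset_edgeFinset.2 le_top),
          card_edgeFinset_top_eq_card_choose_two]
    _ ≤ ∑ c ∈ commonColors G ce cv, #((colorClass G ce c).servedPairs {x | cv x = c}) :=
        (card_le_card h.nonedges_subset).trans card_biUnion_le
    _ ≤ ∑ c ∈ commonColors G ce cv,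
          (#(colorClass G ce c).edgeFinset + #{x | cv x = c} - 1).choose 2 := by
        refine sum_le_sum fun c hc => card_servedPairs_le ?_
        obtain ⟨x, -, rfl⟩ := mem_image.1 (mem_inter.1 hc).2
        exact ⟨x, mem_filter.2 ⟨mem_univ x, rfl⟩⟩
    _ ≤ (∑ c ∈ commonColors G ce cv,
          (#(colorClass G ce c).edgeFinset + #{x | cv x = c} - 1)).choose 2 :=
        Nat.sum_choose_two_le _ _
    _ ≤ (#G.edgeFinset + Fintype.card V - colorsUsed G ce cv).choose 2 :=
        Nat.choose_le_choose _ (by omega)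

end Coloring

theorem le_sub_of_choose_two_sub_le {n m t k : ℕ} (ht2 : 2 ≤ t) (htn : t ≤ n - 1)
    (hm : m ≤ (n - t).choose 2 + t * (n - t) + (t - 2))
    (h : n.choose 2 - m ≤ (m + n - k).choose 2) : k ≤ m + n - t := by
  by_contra! hk
  have hsmall : (m + n - k).choose 2 ≤ (t - 1).choose 2 := Nat.choose_le_choose _ (by omega)
  have hsplit : n.choose 2 = (n - t).choose 2 + t * (n - t) + (t - 1).choose 2 + (t - 1) := by
    have ht := Nat.choose_two_add (t - 1) 1
    rw [Nat.sub_add_cancel (by omega)] at ht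
    rw [← Nat.add_sub_cancel' (by omega : t ≤ n), Nat.choose_two_add, ht,
      Nat.add_sub_cancel_left]
    simp only [mul_one, Nat.choose_succ_self]
    ring
  omega

theorem stmt14_general {V : Type*} [Fintype V] (G : SimpleGraph V)
    (n m t : ℕ) (hn : Fintype.card V = n) (hm : G.edgeSet.ncard = m)
    (ht2 : 2 ≤ t) (htn : t ≤ n - 1)
    (hm2 : m ≤ (n - t).choose 2 + t * (n - t) + (t - 2)) :
    tmc G ≤ m + n - t := by
  refine csSup_le' ?_
  rintro _ ⟨ce, cv, hTMC, rfl⟩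
  have hbound := hTMC.choose_two_sub_le
  rw [← coe_edgeFinset, Set.ncard_coe_finset] at hm
  rw [hm, hn] at hbound
  exact le_sub_of_choose_two_sub_le ht2 htn hm2 hbound

theorem stmt14 {V : Type*} [Fintype V] (G : SimpleGraph V) (hG : G.Connected)
    (n m t : ℕ) (hn : Fintype.card V = n) (hm : G.edgeSet.ncard = m)
    (ht2 : 2 ≤ t) (htn : t ≤ n - 1)
    (hm1 : (n - t).choose 2 + t * (n - t) ≤ m)
    (hm2 : m ≤ (n - t).choose 2 + t * (n - t) + (t - 2)) :
    tmc G ≤ m + n - t :=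
  stmt14_general G n m t hn hm ht2 htn hm2
end

section
/- Let n and t be integers with 2 ≤ t ≤ n − 1, and let G* be an n-vertex graph obtained as follows: take the complete (n−t+1)-partite graph with n − t classes of size 1 and one class V of size t, and then add at most t − 2 additional edges inside V. If the resulting number of edges m satisfies C(n−t,2) + t(n−t) ≤ m ≤ C(n−t,2) + t(n−t) + (t−2), then tmc(G*) = m + n − t. -/
open SimpleGraph

/-!
In a TMC-coloring, an edge can contribute a new color only if its color is not a vertex color, so
at most `m + n - |Q|` colors are used, where `Q` is the set of edges colored with a vertex color.
Because `G[W]` has at most `t - 2` edges it is disconnected, and a total monochromatic path between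
two of its components must pass through a vertex outside `W`, whose color is then the color of
every edge of the path. This links all of `W` to a vertex outside `W` by edges of `Q`, so
`|Q| ≥ t`. Conversely, giving a vertex `u ∉ W` and its `t` edges to `W` one color, and every other
edge and vertex a color of its own, is a TMC-coloring with `m + n - t` colors.
-/

namespace SimpleGraph

variable {V : Type*} {G H : SimpleGraph V}

def edgesWithin (G : SimpleGraph V) (W : Set V) : Set (Sym2 V) :=
  {e ∈ G.edgeSet | ∀ v ∈ e, v ∈ W}

theorem Reachable.exists_adj_dist_lt {w r : V} (h : H.Reachable w r) (hne : w ≠ r) :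
    ∃ p, H.Adj w p ∧ H.dist p r < H.dist w r := by
  obtain ⟨q, hq⟩ := h.exists_walk_length_eq_dist
  cases q with
  | nil => exact absurd rfl hne
  | cons hadj q' =>
    refine ⟨_, hadj, ?_⟩
    have := dist_le q'
    simp only [Walk.length_cons] at hq
    omega

/-- Sending each vertex to the first edge of a shortest path towards `r` is injective. -/
theorem ncard_le_ncard_edgeSet_of_forall_reachable [Finite V] {S : Set V} {r : V}
    (hr : r ∉ S) (hreach : ∀ w ∈ S, H.Reachable w r) :
    S.ncard ≤ H.edgeSet.ncard := by
  have hparent : ∀ w ∈ S, ∃ p, H.Adj w p ∧ H.dist p r < H.dist w r := fun w hw ↦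
    (hreach w hw).exists_adj_dist_lt (ne_of_mem_of_not_mem hw hr)
  choose! parent hadj hlt using hparent
  refine Set.ncard_le_ncard_of_injOn (fun w ↦ s(w, parent w)) (fun w hw ↦ hadj w hw) ?_
  intro a ha b hb hab
  rcases Sym2.eq_iff.mp hab with ⟨h, -⟩ | ⟨hab, hba⟩
  · exact h
  · have ha' := hlt a ha
    have hb' := hlt b hb
    rw [hba] at ha'
    rw [← hab] at hb'
    omega

theorem exists_not_reachable_of_ncard_edgeSet_add_one_lt [Finite V] {S : Set V} {w : V}
    (hw : w ∈ S) (hS : H.edgeSet.ncard + 1 < S.ncard) : ∃ y ∈ S, ¬ H.Reachable w y := by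
  by_contra! hreach
  have := ncard_le_ncard_edgeSet_of_forall_reachable (S := S \ {w}) (r := w) (by simp)
    fun y hy ↦ (hreach y hy.1).symm
  rw [Set.ncard_sdiff_singleton_of_mem hw] at this
  omega

theorem Walk.reachable_fromEdgeSet {s : Set (Sym2 V)} {x y : V} (p : G.Walk x y)
    (hp : ∀ e ∈ p.edges, e ∈ s) : (fromEdgeSet s).Reachable x y :=
  ⟨p.transfer _ fun e he ↦ by
    rw [edgeSet_fromEdgeSet]
    exact ⟨hp e he, G.not_isDiag_of_mem_edgeSet (p.edges_subset_edgeSet he)⟩⟩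

theorem Walk.mem_support_tail_dropLast_s15 {x y u : V} (p : G.Walk x y) (hu : u ∈ p.support)
    (hx : u ≠ x) (hy : u ≠ y) : u ∈ p.support.tail.dropLast := by
  have htail : u ∈ p.support.tail := by
    rw [← p.cons_tail_support, List.mem_cons] at hu
    exact hu.resolve_left hx
  refine List.mem_dropLast_of_mem_of_ne_getLast htail ?_
  rwa [List.getLast_tail, getLast_support]

end SimpleGraph

section Coloring

open SimpleGraph

variable {V : Type*} {G : SimpleGraph V} {ce : Sym2 V → ℕ} {cv : V → ℕ}

def vertexColoredEdges (G : SimpleGraph V) (ce : Sym2 V → ℕ) (cv : V → ℕ) : Set (Sym2 V) :=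
  {e ∈ G.edgeSet | ce e ∈ Set.range cv}

theorem colorsUsed_add_ncard_vertexColoredEdges_le [Finite V] :
    colorsUsed G ce cv + (vertexColoredEdges G ce cv).ncard ≤ G.edgeSet.ncard + Nat.card V := by
  set Q := vertexColoredEdges G ce cv
  have hQ : Q ⊆ G.edgeSet := fun e he ↦ he.1
  have hsub : ce '' G.edgeSet ∪ Set.range cv ⊆ ce '' (G.edgeSet \ Q) ∪ Set.range cv := by
    rintro _ (⟨e, he, rfl⟩ | hc)
    · by_cases heQ : e ∈ Q
      · exact Or.inr heQ.2
      · exact Or.inl ⟨e, ⟨he, heQ⟩, rfl⟩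
    · exact Or.inr hc
  have hcolors : colorsUsed G ce cv ≤ (G.edgeSet \ Q).ncard + Nat.card V :=
    calc colorsUsed G ce cv ≤ (ce '' (G.edgeSet \ Q) ∪ Set.range cv).ncard :=
          Set.ncard_le_ncard hsub
      _ ≤ (ce '' (G.edgeSet \ Q)).ncard + (Set.range cv).ncard := Set.ncard_union_le _ _
      _ ≤ (G.edgeSet \ Q).ncard + Nat.card V :=
          add_le_add (Set.ncard_image_le (Set.toFinite _)) (Finite.card_range_le cv)
  rw [Set.ncard_sdiff hQ] at hcolors
  have := Set.ncard_le_ncard hQ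
  omega

theorem IsTotalMonoWalk.edge_color_eq_of_mem_support {x y u : V} {p : G.Walk x y}
    (hp : IsTotalMonoWalk ce cv p) (hu : u ∈ p.support) (hx : u ≠ x) (hy : u ≠ y) :
    ∀ e ∈ p.edges, ce e = cv u := by
  obtain ⟨c, hce, hcv⟩ := hp
  intro e he
  rw [hce e he, hcv u (p.mem_support_tail_dropLast_s15 hu hx hy)]

theorem IsTMCColoring.exists_reachable_of_not_reachable (h : IsTMCColoring G ce cv) {W : Set V}
    {x y : V} (hx : x ∈ W) (hy : y ∈ W)
    (hxy : ¬ (fromEdgeSet (G.edgesWithin W)).Reachable x y) :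
    ∃ u ∉ W, (fromEdgeSet (vertexColoredEdges G ce cv)).Reachable x y ∧
      (fromEdgeSet (vertexColoredEdges G ce cv)).Reachable x u := by
  classical
  obtain ⟨p, -, hmono⟩ := h x y fun h ↦ hxy (h ▸ Reachable.refl x)
  obtain ⟨u, hu, huW⟩ : ∃ u ∈ p.support, u ∉ W := by
    by_contra! hin
    exact hxy <| p.reachable_fromEdgeSet fun e he ↦
      ⟨p.edges_subset_edgeSet he, fun v hv ↦ hin v (p.mem_support_of_mem_edges he hv)⟩
  have hQ : ∀ e ∈ p.edges, e ∈ vertexColoredEdges G ce cv := fun e he ↦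
    ⟨p.edges_subset_edgeSet he, u,
      (hmono.edge_color_eq_of_mem_support hu (ne_of_mem_of_not_mem hx huW).symm
        (ne_of_mem_of_not_mem hy huW).symm e he).symm⟩
  exact ⟨u, huW, p.reachable_fromEdgeSet hQ, (p.takeUntil u hu).reachable_fromEdgeSet
    fun e he ↦ hQ e (p.edges_takeUntil_subset_edges hu he)⟩

theorem IsTMCColoring.ncard_le_ncard_vertexColoredEdges [Finite V] (h : IsTMCColoring G ce cv)
    {W : Set V} (hW : (G.edgesWithin W).ncard + 2 ≤ W.ncard) :
    W.ncard ≤ (vertexColoredEdges G ce cv).ncard := by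
  set GW := fromEdgeSet (G.edgesWithin W)
  set Q := vertexColoredEdges G ce cv
  obtain ⟨w, hw⟩ : W.Nonempty := Set.nonempty_of_ncard_ne_zero (by omega)
  have hGW : GW.edgeSet.ncard + 1 < W.ncard := by
    have : GW.edgeSet.ncard ≤ (G.edgesWithin W).ncard :=
      Set.ncard_le_ncard (edgeSet_fromEdgeSet (G.edgesWithin W) ▸ Set.sdiff_subset)
    omega
  obtain ⟨y, hy, hwy⟩ := exists_not_reachable_of_ncard_edgeSet_add_one_lt hw hGW
  obtain ⟨u, huW, hwy', hwu⟩ := h.exists_reachable_of_not_reachable hw hy hwy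
  have hreach : ∀ v ∈ W, (fromEdgeSet Q).Reachable v u := by
    intro v hv
    by_cases hwv : GW.Reachable w v
    · have hvy : ¬ GW.Reachable v y := fun hvy ↦ hwy (hwv.trans hvy)
      obtain ⟨-, -, hvy', -⟩ := h.exists_reachable_of_not_reachable hv hy hvy
      exact hvy'.trans (hwy'.symm.trans hwu)
    · obtain ⟨-, -, hwv', -⟩ := h.exists_reachable_of_not_reachable hw hv hwv
      exact hwv'.symm.trans hwu
  calc W.ncard ≤ (fromEdgeSet Q).edgeSet.ncard :=
        ncard_le_ncard_edgeSet_of_forall_reachable huW hreach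
    _ ≤ Q.ncard := Set.ncard_le_ncard (edgeSet_fromEdgeSet Q ▸ Set.sdiff_subset)

theorem exists_isTMCColoring_colorsUsed_add_ncard_eq [Finite V] {u : V} {S : Set V} (hu : u ∉ S)
    (hadj : ∀ w ∈ S, G.Adj u w) (hnonadj : ∀ x y, x ≠ y → ¬ G.Adj x y → x ∈ S ∧ y ∈ S) :
    ∃ ce cv, IsTMCColoring G ce cv ∧
      colorsUsed G ce cv + S.ncard = G.edgeSet.ncard + Nat.card V := by
  classical
  obtain ⟨f, hf⟩ := Countable.exists_injective_nat (V ⊕ Sym2 V)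
  set star := (fun w ↦ s(u, w)) '' S
  let ce : Sym2 V → ℕ := fun e ↦ if e ∈ star then f (.inl u) else f (.inr e)
  let cv : V → ℕ := fun v ↦ f (.inl v)
  have hstar : star ⊆ G.edgeSet := by
    rintro _ ⟨w, hw, rfl⟩
    exact hadj w hw
  have hstar_card : star.ncard = S.ncard := by
    refine Set.InjOn.ncard_image fun a ha b hb hab ↦ ?_
    rcases Sym2.eq_iff.mp hab with ⟨-, h⟩ | ⟨h, -⟩
    · exact h
    · exact absurd (h ▸ hb) hu
  have htmc : IsTMCColoring G ce cv := by
    intro x y hxy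
    by_cases hxy' : G.Adj x y
    · exact ⟨hxy'.toWalk, by simp [hxy], ce s(x, y), by simp, by simp⟩
    obtain ⟨hx, hy⟩ := hnonadj x y hxy hxy'
    refine ⟨.cons (hadj x hx).symm (hadj y hy).toWalk, ?_, f (.inl u), ?_, by simp [cv]⟩
    · simp [hxy, ne_of_mem_of_not_mem hx hu, (ne_of_mem_of_not_mem hy hu).symm]
    · have hxu : s(x, u) ∈ star := ⟨x, hx, Sym2.eq_swap⟩
      have huy : s(u, y) ∈ star := ⟨y, hy, rfl⟩
      simp [ce, hxu, huy]
  have hcolors : ce '' G.edgeSet ∪ Set.range cv =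
      f '' (Set.range Sum.inl ∪ Sum.inr '' (G.edgeSet \ star)) := by
    ext c
    constructor
    · rintro (⟨e, he, rfl⟩ | ⟨v, rfl⟩)
      · by_cases hs : e ∈ star
        · exact ⟨.inl u, .inl ⟨u, rfl⟩, (if_pos hs).symm⟩
        · exact ⟨.inr e, .inr ⟨e, ⟨he, hs⟩, rfl⟩, (if_neg hs).symm⟩
      · exact ⟨.inl v, .inl ⟨v, rfl⟩, rfl⟩
    · rintro ⟨_, ⟨v, rfl⟩ | ⟨e, ⟨he, hs⟩, rfl⟩, rfl⟩
      · exact .inr ⟨v, rfl⟩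
      · exact .inl ⟨e, he, if_neg hs⟩
  refine ⟨ce, cv, htmc, ?_⟩
  have hcard := Set.ncard_le_ncard hstar
  rw [colorsUsed, hcolors, Set.ncard_image_of_injective _ hf,
    Set.ncard_union_eq (Set.disjoint_left.2 (by rintro _ ⟨v, rfl⟩ ⟨e, -, h⟩; cases h)),
    Set.ncard_range_of_injective Sum.inl_injective,
    Set.ncard_image_of_injective _ Sum.inr_injective,
    Set.ncard_sdiff hstar, hstar_card]
  omega

theorem tmc_eq_of_isTMCColoring [Fintype V] {k : ℕ}
    (h : IsTMCColoring G ce cv) (hk : colorsUsed G ce cv = k)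
    (hle : ∀ ce cv, IsTMCColoring G ce cv → colorsUsed G ce cv ≤ k) : tmc G = k :=
  IsGreatest.csSup_eq ⟨⟨ce, cv, h, hk⟩, by rintro _ ⟨ce, cv, h, rfl⟩; exact hle ce cv h⟩

end Coloring

theorem stmt15_general {V : Type*} [Fintype V] (n t : ℕ) (ht2 : 2 ≤ t) (htn : t ≤ n - 1)
    (hn : Fintype.card V = n) (W : Set V) (hW : W.ncard = t)
    (G : SimpleGraph V)
    (hout : ∀ u v : V, u ≠ v → (u ∉ W ∨ v ∉ W) → G.Adj u v)
    (hin : {e ∈ G.edgeSet | ∀ v ∈ e, v ∈ W}.ncard ≤ t - 2) :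
    tmc G = G.edgeSet.ncard + n - t := by
  rw [← Nat.card_eq_fintype_card] at hn
  obtain ⟨u, hu⟩ : ∃ u, u ∉ W := by
    by_contra! h
    rw [Set.eq_univ_of_forall h, Set.ncard_univ] at hW
    omega
  obtain ⟨ce, cv, h, hcolors⟩ := exists_isTMCColoring_colorsUsed_add_ncard_eq hu
    (fun w hw ↦ hout u w (ne_of_mem_of_not_mem hw hu).symm (.inl hu))
    (fun x y hxy hadj ↦ by constructor <;> by_contra hxW <;> exact hadj (hout x y hxy (by tauto)))
  refine tmc_eq_of_isTMCColoring h (by omega) fun ce cv h ↦ ?_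
  have := h.ncard_le_ncard_vertexColoredEdges (W := W) (by unfold edgesWithin; omega)
  have := colorsUsed_add_ncard_vertexColoredEdges_le (G := G) (ce := ce) (cv := cv)
  omega

theorem stmt15 {V : Type*} [Fintype V] (n t : ℕ) (ht2 : 2 ≤ t) (htn : t ≤ n - 1)
    (hn : Fintype.card V = n) (W : Set V) (hW : W.ncard = t)
    (G : SimpleGraph V)
    (hout : ∀ u v : V, u ≠ v → (u ∉ W ∨ v ∉ W) → G.Adj u v)
    (hin : {e ∈ G.edgeSet | ∀ v ∈ e, v ∈ W}.ncard ≤ t - 2)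
    (hm1 : (n - t).choose 2 + t * (n - t) ≤ G.edgeSet.ncard)
    (hm2 : G.edgeSet.ncard ≤ (n - t).choose 2 + t * (n - t) + (t - 2)) :
    tmc G = G.edgeSet.ncard + n - t :=
  stmt15_general n t ht2 htn hn W hW G hout hin
end
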